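/- arXiv:1401.5123 — 8 statements merged into one kernel-verified Lean document; each statement's English description precedes it below -/
import Mathlib

section
/- Let d ≥ 2 and let σ_d : ℝ/ℤ → ℝ/ℤ be the map x ↦ d·x. Suppose x ∈ ℝ/ℤ is such that the chords joining e^{2πi σ_d^i(x)} to e^{2πi σ_d^{i+1}(x)} in the closed unit disk are pairwise unlinked (no two of them cross in the open disk) for all i ≥ 0. Then x is preperiodic under σ_d (i.e., there exist m ≥ 0 and n ≥ 1 with σ_d^{m+n}(x) = σ_d^m(x)). -/
open Function

noncomputable section

/-- The circle ℝ/ℤ. -/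
abbrev S1 := AddCircle (1 : ℝ)

/-- σ_d : multiplication by d on ℝ/ℤ. -/
def sig (d : ℕ) : S1 → S1 := fun x => d • x

/-- Two chords of the closed unit disk, with endpoint pairs {a,b} and {c,e}, are linked
(cross in the open unit disk) iff the pairs strictly separate each other on the circle. -/
def Linked (a b c e : S1) : Prop :=
  (sbtw a c b ∧ sbtw b e a) ∨ (sbtw a e b ∧ sbtw b c a)

lemma sbtw_lift (t a b : ℝ) (h0 : 0 < a) (h1 : a < b) (h2 : b < 1) :
    sbtw (t : S1) ((t + a : ℝ) : S1) ((t + b : ℝ) : S1) := by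
  rw [sbtw_iff_btw_not_btw]
  constructor
  · rw [QuotientAddGroup.btw_coe_iff]
    have e1 : toIcoMod (by norm_num : (0:ℝ) < 1) t (t + a) = t + a :=
      (toIcoMod_eq_self _).2 ⟨by linarith, by linarith⟩
    have e2 : toIocMod (by norm_num : (0:ℝ) < 1) t (t + b) = t + b :=
      (toIocMod_eq_self _).2 ⟨by linarith, by linarith⟩
    rw [e1, e2]; linarith
  · rw [QuotientAddGroup.btw_coe_iff]
    have e1 : toIcoMod (by norm_num : (0:ℝ) < 1) (t + b) (t + a) = t + a + 1 :=
      (toIcoMod_eq_iff _).2 ⟨⟨by linarith, by linarith⟩, ⟨-1, by simp [zsmul_eq_mul]⟩⟩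
    have e2 : toIocMod (by norm_num : (0:ℝ) < 1) (t + b) t = t + 1 :=
      (toIocMod_eq_iff _).2 ⟨⟨by linarith, by linarith⟩, ⟨-1, by simp [zsmul_eq_mul]⟩⟩
    rw [e1, e2]; push_neg; linarith

lemma coe_shift (u v : ℝ) (h : u = v + 1) : ((u : ℝ) : S1) = ((v : ℝ) : S1) := by
  rw [h]; exact AddCircle.coe_add_period 1 v

lemma coe_congr (u v : ℝ) (h : u = v) : ((u : ℝ) : S1) = ((v : ℝ) : S1) := by rw [h]

lemma linked_of (dR : ℝ) (hd : 1 ≤ dR) (t e c : ℝ) (hc2 : |c| ≤ 1/2) (he : e ≠ 0)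
    (h1 : |c| + dR * |e| < 1) (h2 : dR * |e| < |c|) :
    Linked (t : S1) ((t + c : ℝ) : S1) ((t + e : ℝ) : S1) ((t + c + dR * e : ℝ) : S1) := by
  have hep : 0 < |e| := abs_pos.2 he
  have hee : |e| ≤ dR * |e| := le_mul_of_one_le_left (abs_nonneg e) hd
  rcases he.lt_or_gt with hneg | hpos
  · -- e < 0
    have habs : |e| = -e := abs_of_neg hneg
    rcases (abs_pos.1 (lt_of_le_of_lt (by positivity) h2) : c ≠ 0).lt_or_gt with hcneg | hcpos
    · -- c < 0, e < 0 : second disjunct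
      have hcabs : |c| = -c := abs_of_neg hcneg
      right
      constructor
      ·
        have s := sbtw_lift t (1 + c + dR * e) (1 + c)
          (by nlinarith [abs_nonneg e, abs_nonneg c]) (by nlinarith) (by linarith)
        rwa [coe_shift (t + (1 + c + dR * e)) (t + c + dR * e) (by ring),
             coe_shift (t + (1 + c)) (t + c) (by ring)] at s
      · -- sbtw ↑(t+c) ↑(t+e) ↑t
        have s := sbtw_lift (t + c) (e - c) (-c)
          (by nlinarith) (by linarith) (by linarith)
        rwa [coe_congr (t + c + (e - c)) (t + e) (by ring),
             coe_congr (t + c + -c) t (by ring)] at s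
    · -- c > 0, e < 0 : second disjunct
      have hcabs : |c| = c := abs_of_pos hcpos
      right
      constructor
      · have s := sbtw_lift t (c + dR * e) c (by nlinarith) (by nlinarith) (by linarith)
        rwa [coe_congr (t + (c + dR * e)) (t + c + dR * e) (by ring)] at s
      · have s := sbtw_lift (t + c) (1 + e - c) (1 - c)
          (by nlinarith) (by linarith) (by linarith)
        rwa [coe_shift (t + c + (1 + e - c)) (t + e) (by ring),
             coe_shift (t + c + (1 - c)) t (by ring)] at s
  · -- e > 0
    have habs : |e| = e := abs_of_pos hpos
    rcases (abs_pos.1 (lt_of_le_of_lt (by positivity) h2) : c ≠ 0).lt_or_gt with hcneg | hcpos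
    · -- c < 0, e > 0 : first disjunct
      have hcabs : |c| = -c := abs_of_neg hcneg
      left
      constructor
      · have s := sbtw_lift t e (1 + c) (by linarith) (by nlinarith) (by linarith)
        rwa [coe_shift (t + (1 + c)) (t + c) (by ring)] at s
      · have s := sbtw_lift (t + c) (dR * e) (-c)
          (by nlinarith) (by nlinarith) (by linarith)
        rwa [coe_congr (t + c + -c) t (by ring)] at s
    · -- c > 0, e > 0 : first disjunct
      have hcabs : |c| = c := abs_of_pos hcpos
      left
      constructor
      · exact sbtw_lift t e c (by linarith) (by nlinarith) (by linarith)
      · have s := sbtw_lift (t + c) (dR * e) (1 - c)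
          (by nlinarith) (by nlinarith) (by linarith)
        rwa [coe_shift (t + c + (1 - c)) t (by ring)] at s

lemma exists_rep (z : S1) : ∃ e : ℝ, (e : S1) = z ∧ |e| = ‖z‖ := by
  induction z using QuotientAddGroup.induction_on with
  | H u =>
    refine ⟨u - round u, ?_, ?_⟩
    · rw [AddCircle.coe_sub]
      have : ((round u : ℝ) : S1) = 0 := by
        rw [QuotientAddGroup.eq_zero_iff]
        exact ⟨round u, by simp [zsmul_eq_mul]⟩
      rw [this, sub_zero]
    · rw [AddCircle.norm_eq]; norm_num

lemma norm_nsmul_eq (n : ℕ) (z : S1) (h : (n : ℝ) * ‖z‖ ≤ 1 / 2) :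
    ‖n • z‖ = n * ‖z‖ := by
  obtain ⟨e, rfl, he⟩ := exists_rep z
  rw [← AddCircle.coe_nsmul]
  have habs : |(n • e : ℝ)| = n * |e| := by
    rw [nsmul_eq_mul, abs_mul, Nat.abs_cast]
  rw [(AddCircle.norm_coe_eq_abs_iff 1 one_ne_zero).2 (by rw [habs, he]; simpa using h),
    habs, he]

/-- If the consecutive-image chords of a point x under σ_d are pairwise unlinked,
then x is preperiodic. -/
theorem stmt0 (d : ℕ) (hd : 2 ≤ d) (x : S1)
    (h : ∀ i j : ℕ, i ≠ j →
      ¬ Linked ((sig d)^[i] x) ((sig d)^[i + 1] x) ((sig d)^[j] x) ((sig d)^[j + 1] x)) :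
    ∃ m n : ℕ, 1 ≤ n ∧ (sig d)^[m + n] x = (sig d)^[m] x := by
  by_contra hcon
  push_neg at hcon
  set X : ℕ → S1 := fun n => (sig d)^[n] x with hX
  have hne : ∀ m n : ℕ, m < n → X m ≠ X n := by
    intro m n hmn heq
    exact hcon m (n - m) (by omega)
      (by rw [show m + (n - m) = n by omega]; exact heq.symm)
  have hsucc : ∀ n, X (n + 1) = d • X n := by
    intro n; rw [hX]; simp only [Function.iterate_succ_apply']; rfl
  have hdpos : (0:ℝ) < d := by positivity
  have hd1R : (1:ℝ) ≤ d := by exact_mod_cast (by omega : 1 ≤ d)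
  set w : ℕ → ℝ := fun n => ‖(d - 1) • X n‖ with hw
  have hdecomp : ∀ z : S1, d • z = z + (d - 1) • z := by
    intro z
    conv_lhs => rw [show d = 1 + (d - 1) by omega, add_nsmul, one_nsmul]
  have wpos : ∀ n, 0 < w n := by
    intro n
    rw [hw]; simp only
    rw [norm_pos_iff]
    intro h0
    exact hne n (n + 1) (by omega) (by rw [hsucc n, hdecomp, h0, add_zero])
  have growth : ∀ n, w n ≤ 1 / (2 * d) → w (n + 1) = d * w n := by
    intro n hn
    have : w (n+1) = ‖(d:ℕ) • ((d - 1) • X n)‖ := by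
      rw [hw]; simp only; rw [hsucc n, smul_comm]
    rw [this, norm_nsmul_eq d _ (by
      show (d:ℝ) * w n ≤ 1 / 2
      rw [le_div_iff₀ (by positivity : (0:ℝ) < 2 * d)] at hn
      nlinarith [wpos n])]
  set eps : ℝ := 1 / (2 * (d:ℝ)^2) with heps
  have hepspos : 0 < eps := by positivity
  have hfreq : ∀ N : ℕ, ∃ n ≥ N, eps < w n := by
    intro N
    by_contra hno
    push_neg at hno
    have key : ∀ k : ℕ, w (N + k) = d ^ k * w N := by
      intro k
      induction k with
      | zero => simp
      | succ k ih =>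
        have hle : w (N + k) ≤ eps := hno _ (by omega)
        have hle' : w (N + k) ≤ 1 / (2 * d) := by
          refine hle.trans ?_
          rw [heps, div_le_div_iff₀ (by positivity) (by positivity)]
          nlinarith
        rw [show N + (k + 1) = (N + k) + 1 by omega, growth _ hle', ih, pow_succ]
        ring
    obtain ⟨k, hk⟩ := pow_unbounded_of_one_lt (eps / w N) (show (1:ℝ) < d by exact_mod_cast hd.trans_lt' one_lt_two)
    have hc := hno (N + k) (by omega)
    rw [key k] at hc
    rw [div_lt_iff₀ (wpos N)] at hk
    nlinarith
  have hfreq' : ∃ᶠ n in Filter.atTop, eps < w n := Filter.frequently_atTop.2 hfreq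
  obtain ⟨φ, hφ, hφw⟩ := Filter.extraction_of_frequently_atTop hfreq'
  obtain ⟨y, -, ψ, hψ, hty⟩ :=
    IsCompact.tendsto_subseq isCompact_univ (fun k : ℕ => Set.mem_univ (X (φ k)))
  obtain ⟨K, hK⟩ := (Metric.tendsto_atTop.1 hty) (1 / (8 * (d:ℝ)^3)) (by positivity)
  simp only [Function.comp] at hK
  set m := φ (ψ K) with hm
  set n := φ (ψ (K + 1)) with hn
  have hmn : m < n := hφ (hψ (by omega))
  have hdist : dist (X n) (X m) < 1 / (4 * (d:ℝ)^3) := by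
    have h1 := hK K le_rfl
    have h2 := hK (K + 1) (by omega)
    calc dist (X n) (X m) ≤ dist (X n) y + dist (X m) y := dist_triangle_right _ _ _
      _ < 1 / (8 * (d:ℝ)^3) + 1 / (8 * (d:ℝ)^3) := by exact add_lt_add h2 h1
      _ = 1 / (4 * (d:ℝ)^3) := by ring
  obtain ⟨t, ht, -⟩ := exists_rep (X m)
  obtain ⟨e, heq, he⟩ := exists_rep (X n - X m)
  obtain ⟨c, hceq, hc⟩ := exists_rep ((d - 1) • X m)
  have hene : X n - X m ≠ 0 := sub_ne_zero.2 (Ne.symm (hne m n hmn))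
  have he0 : e ≠ 0 := by
    intro h0
    rw [h0] at heq
    apply hene
    rw [← heq]
    simp
  have hel : |e| < 1 / (4 * (d:ℝ)^3) := by
    rw [he, ← dist_eq_norm]
    exact hdist
  have hcl : eps < |c| := by rw [hc]; exact hφw (ψ K)
  have hch : |c| ≤ 1 / 2 := by
    rw [hc]
    simpa using AddCircle.norm_le_half_period 1 (one_ne_zero)
  have hbig : (d:ℝ) * |e| < eps := by
    have : (d:ℝ) * (1 / (4 * (d:ℝ)^3)) = 1 / (4 * (d:ℝ)^2) := by
      field_simp
    calc (d:ℝ) * |e| < (d:ℝ) * (1 / (4 * (d:ℝ)^3)) := by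
          exact mul_lt_mul_of_pos_left hel hdpos
      _ = 1 / (4 * (d:ℝ)^2) := this
      _ < eps := by rw [heps, div_lt_div_iff₀ (by positivity) (by positivity)]; nlinarith
  have L := linked_of d hd1R t e c hch he0
    (by nlinarith) (by linarith)
  have p1 : ((t : ℝ) : S1) = X m := ht
  have p2 : ((t + c : ℝ) : S1) = X (m + 1) := by
    rw [AddCircle.coe_add, ht, hceq, hsucc m, hdecomp]
  have p3 : ((t + e : ℝ) : S1) = X n := by
    rw [AddCircle.coe_add, ht, heq, add_sub_cancel]
  have p4 : ((t + c + (d:ℝ) * e : ℝ) : S1) = X (n + 1) := by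
    have hde : (((d:ℝ) * e : ℝ) : S1) = (d:ℕ) • ((e : ℝ) : S1) := by
      rw [← AddCircle.coe_nsmul, nsmul_eq_mul]
    rw [AddCircle.coe_add, p2, hde, heq, hsucc n, hsucc m, hdecomp, smul_sub, hdecomp (X m)]
    abel
  rw [p1, p2, p3, p4] at L
  exact h m n (Nat.ne_of_lt hmn) L
end
end

section
/- Let d ≥ 2 and σ_d(x)=d·x on ℝ/ℤ. Let Q be a 'collapsing quadrilateral': the convex hull of four circle points x < y < x' < y' with σ_d(x)=σ_d(x') ≠ σ_d(y)=σ_d(y'). Then the diagonal xx' of Q cannot be completed to a closed loop (Jordan curve) by a finite collection of critical chords each of which is unlinked with all four edges of Q. -/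
open Function

noncomputable section

section CircAux

variable {α : Type*} [CircularOrder α]

theorem circ_ne12 {a b c : α} (h : sbtw a b c) : a ≠ b := by
  rintro rfl; exact sbtw_irrefl_left h

theorem circ_ne23 {a b c : α} (h : sbtw a b c) : b ≠ c := by
  rintro rfl; exact sbtw_irrefl_right h

theorem circ_ne13 {a b c : α} (h : sbtw a b c) : a ≠ c := by
  rintro rfl; exact sbtw_irrefl_left_right h

theorem circ_tri {a b z : α} (hab : a ≠ b) (hza : z ≠ a) (hzb : z ≠ b) :
    sbtw a z b ∨ sbtw b z a := by
  rcases btw_total a z b with h | h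
  · left
    refine h.sbtw_of_not_btw ?_
    intro h'
    rcases btw_antisymm h h' with e | e | e
    exacts [hza e.symm, hzb e, hab e.symm]
  · right
    refine h.sbtw_of_not_btw ?_
    intro h'
    rcases btw_antisymm h h' with e | e | e
    exacts [hzb e.symm, hza e, hab e]

/-- Crossing lemma: if `u` lies strictly on one arc from `a` to `b` and `v` strictly on
the other, then the chords `uv` and `ab` strictly separate each other. -/
theorem circ_cross {a b u v : α} (h1 : sbtw a u b) (h2 : sbtw b v a) :
    sbtw u b v ∧ sbtw v a u :=
  ⟨(h2.cyclic_left.trans_left h1).cyclic_left,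
   (h1.cyclic_left.trans_left h2).cyclic_left⟩

/-- Splitting an arc at an interior point. -/
theorem circ_split {a b c z : α} (hz : sbtw a z c) (hb : sbtw a b c) (hzb : z ≠ b) :
    sbtw a z b ∨ sbtw b z c := by
  rcases circ_tri (circ_ne12 hb) (circ_ne12 hz).symm hzb with h | h
  · exact Or.inl h
  · right
    by_contra hbzc
    have hczb : btw c z b := by rwa [sbtw_iff_not_btw, not_not] at hbzc
    have hs : sbtw c z b := by
      refine hczb.sbtw_of_not_btw ?_
      intro h'
      rcases btw_antisymm hczb h' with e | e | e
      exacts [circ_ne23 hz e.symm, hzb e, circ_ne23 hb e]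
    have : sbtw a c z := h.cyclic_right.trans_left hs.cyclic_right
    exact sbtw_asymm hz this.cyclic_left

end CircAux

/-- The diagonal xx' of a collapsing quadrilateral cannot be completed to a Jordan loop
by finitely many critical chords each unlinked with all four edges of the quadrilateral. -/
theorem stmt9 (d : ℕ) (hd : 2 ≤ d) (x y x' y' : S1)
    (hcyc : sbtw x y x' ∧ sbtw y x' y' ∧ sbtw x' y' x)
    (hcx : sig d x = sig d x') (hcy : sig d y = sig d y')
    (hne : sig d x ≠ sig d y) :
    ¬ ∃ (n : ℕ) (c : Fin (n + 1) → S1 × S1),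
      0 < n ∧
      c 0 = (x, x') ∧
      (∀ i, sig d (c i).1 = sig d (c i).2) ∧
      (∀ i, i ≠ 0 → ∀ e ∈ ({(x, y), (y, x'), (x', y'), (y', x)} : Set (S1 × S1)),
        ¬ Linked (c i).1 (c i).2 e.1 e.2) ∧
      (∀ i : Fin n, (c i.castSucc).2 = (c i.succ).1) ∧
      (c (Fin.last n)).2 = x ∧
      Function.Injective (fun i => (c i).1) ∧
      (∀ i j, i ≠ j → ¬ ((c i).1 = (c j).2 ∧ (c i).2 = (c j).1)) := by
  rintro ⟨n, c, hn, h0, hcrit, hunl, hcons, hlast, hinj, hnorev⟩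
  obtain ⟨h1, h2, h3⟩ := hcyc
  -- derived cyclic-order facts for the four vertices (cyclic order x, y, x', y')
  have d1 : sbtw x x' y' := h3.cyclic_left.cyclic_left
  have d2 : sbtw y x' x := h1.cyclic_left
  have d3 : sbtw x y y' := h1.trans_right d1
  have xB : sbtw y' x y := d3.cyclic_left.cyclic_left
  have d4 : sbtw y' y x' := h2.cyclic_left.cyclic_left
  have d5 : sbtw x' y' y := h2.cyclic_left
  have hyy' : y ≠ y' := circ_ne13 h2
  -- every endpoint of the chain has image σ x, hence differs from y and y'
  have hzy : ∀ z : S1, sig d z = sig d x → z ≠ y := fun z hzs e => hne (by rw [← hzs, e])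
  have hzy' : ∀ z : S1, sig d z = sig d x → z ≠ y' := fun z hzs e =>
    hne (by rw [← hzs, e, ← hcy])
  have hsig1 : ∀ k (hk : k < n + 1), sig d (c ⟨k, hk⟩).1 = sig d x := by
    intro k
    induction k with
    | zero =>
      intro hk
      have e0 : (⟨0, hk⟩ : Fin (n + 1)) = 0 := by ext; simp
      rw [e0, h0]
    | succ m ih =>
      intro hk
      have hm : m < n + 1 := Nat.lt_of_succ_lt hk
      have hmn : m < n := Nat.lt_of_succ_lt_succ hk
      have e : (c ⟨m, hm⟩).2 = (c ⟨m + 1, hk⟩).1 := hcons ⟨m, hmn⟩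
      rw [← e, ← hcrit ⟨m, hm⟩]
      exact ih hm
  have h1n : 1 < n + 1 := by omega
  have hc1 : (c ⟨1, h1n⟩).1 = x' := by
    have e := hcons (⟨0, hn⟩ : Fin n)
    have e0 : ((⟨0, hn⟩ : Fin n).castSucc) = (0 : Fin (n + 1)) := by ext; simp
    have e1 : ((⟨0, hn⟩ : Fin n).succ) = (⟨1, h1n⟩ : Fin (n + 1)) := by ext; simp
    rw [e0, e1, h0] at e
    exact e.symm
  -- main step: a chord (other than the diagonal) starting in the closed arc from y to y'
  -- through x' must also end there
  have step : ∀ k (hk1 : 1 ≤ k) (hkn : k ≤ n),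
      sbtw y (c ⟨k, Nat.lt_succ_of_le hkn⟩).1 y' →
      sbtw y (c ⟨k, Nat.lt_succ_of_le hkn⟩).2 y' := by
    intro k hk1 hkn hu
    set i : Fin (n + 1) := ⟨k, Nat.lt_succ_of_le hkn⟩ with hi
    have hi0 : i ≠ 0 := by
      intro e
      have := congrArg Fin.val e
      simp [hi] at this
      omega
    have hsu : sig d (c i).1 = sig d x := hsig1 k (Nat.lt_succ_of_le hkn)
    have hsv : sig d (c i).2 = sig d x := by rw [← hcrit i]; exact hsu
    by_contra hvA
    have hv : sbtw y' (c i).2 y := by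
      rcases circ_tri hyy' (hzy _ hsv) (hzy' _ hsv) with h | h
      · exact absurd h hvA
      · exact h
    by_cases hux : (c i).1 = x'
    · -- chord starts at x'; its only escape across would be to x, a reversal of c 0
      have hvx : (c i).2 ≠ x := by
        intro hvx
        refine hnorev 0 i (fun e => hi0 e.symm) ⟨?_, ?_⟩
        · rw [h0]; exact hvx.symm
        · rw [h0]; exact hux.symm
      rcases circ_split hv xB hvx with hvl | hvr
      · have hcr := circ_cross hvl d1
        exact hunl i hi0 (y', x) (by simp)
          (by rw [hux]; exact Or.inl ⟨hcr.2, hcr.1⟩)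
      · have hcr := circ_cross hvr d2
        exact hunl i hi0 (x, y) (by simp)
          (by rw [hux]; exact Or.inl ⟨hcr.2, hcr.1⟩)
    · -- chord starts strictly inside the arc: it crosses an edge of Q
      rcases circ_split hu h2 hux with hul | hur
      · have hcv : sbtw x' (c i).2 y := d5.trans_left hv
        exact hunl i hi0 (y, x') (by simp) (Or.inr (circ_cross hul hcv))
      · have hcv : sbtw y' (c i).2 x' := hv.trans_right d4
        exact hunl i hi0 (x', y') (by simp) (Or.inr (circ_cross hur hcv))
  -- by induction, every chord after the diagonal stays in the arc through x'
  have key : ∀ k (hk1 : 1 ≤ k) (hkn : k ≤ n),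
      sbtw y (c ⟨k, Nat.lt_succ_of_le hkn⟩).1 y' := by
    intro k
    induction k with
    | zero => intro hk1; omega
    | succ m ih =>
      intro _ hkn
      rcases Nat.eq_zero_or_pos m with rfl | hm
      · have e : (c ⟨0 + 1, Nat.lt_succ_of_le hkn⟩).1 = x' := hc1
        rw [e]; exact h2
      · have hmn : m ≤ n := by omega
        have ihm : sbtw y (c ⟨m, Nat.lt_succ_of_le hmn⟩).1 y' := ih hm hmn
        have hstep := step m hm hmn ihm
        have e : (c ⟨m, Nat.lt_succ_of_le hmn⟩).2
            = (c ⟨m + 1, Nat.lt_succ_of_le hkn⟩).1 := hcons ⟨m, by omega⟩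
        rw [← e]
        exact hstep
  -- but the last chord ends at x, which lies on the other arc: contradiction
  have hnA : sbtw y (c ⟨n, Nat.lt_succ_of_le le_rfl⟩).2 y' := step n hn le_rfl (key n hn le_rfl)
  have hlast' : (c ⟨n, Nat.lt_succ_of_le le_rfl⟩).2 = x := hlast
  rw [hlast'] at hnA
  exact sbtw_asymm hnA xB
end
end

section
/- Let σ_3(x) = 3x on ℝ/ℤ. Let C be the convex hull of a finite set C' ⊂ ℝ/ℤ such that σ_3 restricted to C' is exactly two-to-one onto its image, and let S' be the set of all points of (ℝ/ℤ) ∖ C' whose σ_3-image lies in σ_3(C'); assume the convex hull S of S' is unlinked with C (they do not cross in the open disk). Then C equals the convex hull of the union of the two rotations S + 1/3 and S + 2/3 of S (rotating the vertex set by 1/3 and 2/3 and taking the convex hull). -/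
open Function

noncomputable section

/-- σ_3 restricted to C is exactly two-to-one onto its image. -/
def TwoToOne (C : Set S1) : Prop :=
  ∀ x ∈ C, ∃ y ∈ C, x ≠ y ∧ sig 3 x = sig 3 y ∧
    ∀ z ∈ C, sig 3 z = sig 3 x → z = x ∨ z = y

/-- The co-critical set: points outside C whose σ_3-image lies in σ_3(C). -/
def Cocrit (C : Set S1) : Set S1 := {x | x ∉ C ∧ sig 3 x ∈ sig 3 '' C}

/-- Two circle sets are unlinked: no chord with endpoints in A crosses a chord with
endpoints in B. -/
def SetsUnlinked (A B : Set S1) : Prop :=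
  ∀ a ∈ A, ∀ b ∈ A, ∀ c ∈ B, ∀ e ∈ B, ¬ Linked a b c e

/-- An admissible critical set: finite vertex set mapped two-to-one by σ_3 whose
co-critical set is unlinked with it. -/
def Admissible (C : Set S1) : Prop :=
  C.Finite ∧ C.Nonempty ∧ TwoToOne C ∧ SetsUnlinked C (Cocrit C)


-- auxiliary lemmas


lemma coe_frac_ne_zero {q : ℝ} (h0 : 0 < q) (h1 : q < 1) : ((q : ℝ) : S1) ≠ 0 := by
  intro h
  rw [AddCircle.coe_eq_zero_iff] at h
  obtain ⟨n, hn⟩ := h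
  simp only [zsmul_eq_mul, mul_one] at hn
  have hn0 : (0:ℤ) < n := by exact_mod_cast hn ▸ h0
  have hn1 : n < 1 := by exact_mod_cast hn ▸ h1
  omega

lemma sig3_add_third (x : S1) : sig 3 (x + ((1/3 : ℝ) : S1)) = sig 3 x := by
  show (3:ℕ) • (x + _) = (3:ℕ) • x
  rw [smul_add]
  have h1 : (3:ℕ) • (1/3 : ℝ) = 1 := by norm_num
  rw [← AddCircle.coe_nsmul, h1, AddCircle.coe_period, add_zero]

lemma sig3_add_twothird (x : S1) : sig 3 (x + ((2/3 : ℝ) : S1)) = sig 3 x := by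
  show (3:ℕ) • (x + _) = (3:ℕ) • x
  rw [smul_add]
  have h1 : (3:ℕ) • (2/3 : ℝ) = 2 := by norm_num
  have h2 : ((2:ℝ) : S1) = 0 := by
    rw [AddCircle.coe_eq_zero_iff]; exact ⟨2, by norm_num⟩
  rw [← AddCircle.coe_nsmul, h1, h2, add_zero]

lemma fiber_eq {z x : S1} (h : sig 3 z = sig 3 x) :
    z = x ∨ z = x + ((1/3 : ℝ) : S1) ∨ z = x + ((2/3 : ℝ) : S1) := by
  have h3 : (3:ℕ) • (z - x) = 0 := by
    rw [smul_sub]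
    rw [show ((3:ℕ) • z) = sig 3 z from rfl, show ((3:ℕ) • x) = sig 3 x from rfl, h, sub_self]
  set u := z - x with hu
  set r : ℝ := (AddCircle.equivIco 1 0 u : ℝ) with hrdef
  have hr : r ∈ Set.Ico (0:ℝ) 1 := by
    have := (AddCircle.equivIco 1 0 u).2
    simpa using this
  have hrz : (r : S1) = u := (AddCircle.equivIco 1 0).symm_apply_apply u
  rw [← hrz, ← AddCircle.coe_nsmul, AddCircle.coe_eq_zero_iff] at h3
  obtain ⟨n, hn⟩ := h3
  simp only [zsmul_eq_mul, mul_one, nsmul_eq_mul, Nat.cast_ofNat] at hn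
  obtain ⟨hr0, hr1⟩ := hr
  have hn0 : (0:ℤ) ≤ n := by
    have : (0:ℝ) ≤ n := by rw [hn]; positivity
    exact_mod_cast this
  have hn3 : n < 3 := by
    have : (n:ℝ) < 3 := by rw [hn]; nlinarith
    exact_mod_cast this
  have hsub : z - x = (r : S1) := hrz.symm
  interval_cases n
  · left
    have hr' : r = 0 := by push_cast at hn; linarith
    rw [hr'] at hsub
    have : z - x = 0 := by simpa using hsub
    exact sub_eq_zero.mp this
  · right; left
    have hr' : r = 1/3 := by push_cast at hn; linarith
    rw [hr'] at hsub
    rw [sub_eq_iff_eq_add] at hsub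
    rw [hsub, add_comm]
  · right; right
    have hr' : r = 2/3 := by push_cast at hn; linarith
    rw [hr'] at hsub
    rw [sub_eq_iff_eq_add] at hsub
    rw [hsub, add_comm]


/-- An admissible critical set equals the convex hull of the two rotations of its
co-critical set by 1/3 and 2/3; on the level of vertex sets, C is the union of the
two rotated copies of its co-critical set. -/
theorem stmt10 (C : Set S1) (hC : Admissible C) :
    C = (fun x => x + ((1 / 3 : ℝ) : S1)) '' Cocrit C ∪
        (fun x => x + ((2 / 3 : ℝ) : S1)) '' Cocrit C := by
  obtain ⟨hfin, hne, h2, hun⟩ := hC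
  have e13 : ((1/3:ℝ):S1) ≠ 0 := coe_frac_ne_zero (by norm_num) (by norm_num)
  have e23 : ((2/3:ℝ):S1) ≠ 0 := coe_frac_ne_zero (by norm_num) (by norm_num)
  have e12 : ((1/3:ℝ):S1) ≠ ((2/3:ℝ):S1) := by
    intro h
    have h13 : ((1/3:ℝ):S1) = ((2/3:ℝ):S1) - ((1/3:ℝ):S1) := by
      rw [← AddCircle.coe_sub]; norm_num
    rw [← h, sub_self] at h13
    exact e13 h13
  have addcancel : ∀ a : S1, a + ((2/3:ℝ):S1) + ((1/3:ℝ):S1) = a := by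
    intro a
    have h1 : (2/3 + 1/3 : ℝ) = 1 := by norm_num
    rw [add_assoc, ← AddCircle.coe_add, h1, AddCircle.coe_period, add_zero]
  have addcancel' : ∀ a : S1, a + ((1/3:ℝ):S1) + ((2/3:ℝ):S1) = a := by
    intro a
    have h1 : (1/3 + 2/3 : ℝ) = 1 := by norm_num
    rw [add_assoc, ← AddCircle.coe_add, h1, AddCircle.coe_period, add_zero]
  ext x
  constructor
  · intro hx
    obtain ⟨y, hyC, hxy, hsig, hmax⟩ := h2 x hx
    have hy3 : y = x + ((1/3:ℝ):S1) ∨ y = x + ((2/3:ℝ):S1) := by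
      rcases fiber_eq hsig.symm with h | h | h
      · exact absurd h.symm hxy
      · exact Or.inl h
      · exact Or.inr h
    rcases hy3 with hy | hy
    · have htC : x + ((2/3:ℝ):S1) ∉ C := by
        intro htC
        rcases hmax _ htC (sig3_add_twothird x) with h | h
        · exact e23 (add_eq_left.mp h)
        · rw [hy] at h
          exact e12 (add_left_cancel h).symm
      have htco : x + ((2/3:ℝ):S1) ∈ Cocrit C :=
        ⟨htC, ⟨x, hx, (sig3_add_twothird x).symm⟩⟩
      exact Or.inl ⟨_, htco, addcancel x⟩
    · have htC : x + ((1/3:ℝ):S1) ∉ C := by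
        intro htC
        rcases hmax _ htC (sig3_add_third x) with h | h
        · exact e13 (add_eq_left.mp h)
        · rw [hy] at h
          exact e12 (add_left_cancel h)
      have htco : x + ((1/3:ℝ):S1) ∈ Cocrit C :=
        ⟨htC, ⟨x, hx, (sig3_add_third x).symm⟩⟩
      exact Or.inr ⟨_, htco, addcancel' x⟩
  · rintro (⟨s, ⟨hsC, c, hcC, hcs⟩, rfl⟩ | ⟨s, ⟨hsC, c, hcC, hcs⟩, rfl⟩) <;>
    · obtain ⟨y, hyC, hcy, hsig, hmax⟩ := h2 c hcC
      have hc3 : c = s + ((1/3:ℝ):S1) ∨ c = s + ((2/3:ℝ):S1) := by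
        rcases fiber_eq hcs with h | h | h
        · exact absurd (h ▸ hcC) hsC
        · exact Or.inl h
        · exact Or.inr h
      have hy3 : y = s + ((1/3:ℝ):S1) ∨ y = s + ((2/3:ℝ):S1) := by
        have hys : sig 3 y = sig 3 s := by rw [← hsig, hcs]
        rcases fiber_eq hys with h | h | h
        · exact absurd (h ▸ hyC) hsC
        · exact Or.inl h
        · exact Or.inr h
      have both : s + ((1/3:ℝ):S1) ∈ C ∧ s + ((2/3:ℝ):S1) ∈ C := by
        rcases hc3 with hc | hc <;> rcases hy3 with hy | hy
        · exact absurd (hc.trans hy.symm) hcy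
        · exact ⟨hc ▸ hcC, hy ▸ hyC⟩
        · exact ⟨hy ▸ hyC, hc ▸ hcC⟩
        · exact absurd (hc.trans hy.symm) hcy
      first
        | exact both.1
        | exact both.2
end
end

section
/- Let σ_3(x)=3x on ℝ/ℤ. Let C and K be admissible critical sets (degree-two critical convex hulls as in the previous context) with co-critical sets S^C and S^K. If S^C and S^K have a common vertex x, then the chord joining x + 1/3 and x + 2/3 is a critical chord contained in both C and K. -/
open Function

noncomputable section

lemma int_zero (q : ℤ) : ((q : ℝ) : S1) = 0 := by
  rw [AddCircle.coe_eq_zero_iff]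
  exact ⟨q, by simp⟩

lemma fiber3 (a x : S1) (h : sig 3 a = sig 3 x) :
    a = x ∨ a = x + ((1/3 : ℝ) : S1) ∨ a = x + ((2/3 : ℝ) : S1) := by
  have h3 : (3:ℕ) • (a - x) = 0 := by
    simp only [smul_sub, sig] at h ⊢
    rw [h, sub_self]
  obtain ⟨y, hy⟩ := QuotientAddGroup.mk_surjective (a - x)
  have h0 : ((3 * y : ℝ) : S1) = 0 := by
    rw [← hy] at h3
    rw [show (3 * y : ℝ) = (3:ℕ) • y by push_cast; ring]
    rw [← AddCircle.coe_nsmul] at h3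
    exact h3
  rw [AddCircle.coe_eq_zero_iff] at h0
  obtain ⟨n, hn⟩ := h0
  have hyn : y = (n : ℝ) / 3 := by
    have : (n : ℝ) = 3 * y := by simpa using hn
    linarith
  have key : a - x = ((((n % 3 : ℤ) : ℝ) / 3 : ℝ) : S1) := by
    rw [← hy, hyn]
    have e : (n : ℝ) / 3 = ((n % 3 : ℤ) : ℝ) / 3 + ((n / 3 : ℤ) : ℝ) := by
      have h1 := Int.emod_add_mul_ediv n 3
      have h2 : (n : ℝ) = ((n % 3 : ℤ) : ℝ) + 3 * ((n / 3 : ℤ) : ℝ) := by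
        exact_mod_cast congrArg (fun z : ℤ => (z : ℝ)) h1.symm
      linarith
    rw [e, AddCircle.coe_add, int_zero, add_zero]
  have hr : n % 3 = 0 ∨ n % 3 = 1 ∨ n % 3 = 2 := by omega
  rcases hr with hr | hr | hr <;> rw [hr] at key <;> push_cast at key
  · left
    have : a - x = 0 := by simpa using key
    rwa [sub_eq_zero] at this
  · right; left
    rw [← key]; abel
  · right; right
    rw [← key]; abel

lemma main_half (C : Set S1) (h2 : TwoToOne C) (x : S1) (hx : x ∈ Cocrit C) :
    x + ((1/3 : ℝ) : S1) ∈ C ∧ x + ((2/3 : ℝ) : S1) ∈ C := by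
  obtain ⟨hxC, c, hcC, hc3⟩ := hx
  obtain ⟨y, hyC, hcy, hsig, -⟩ := h2 c hcC
  have hy3 : sig 3 y = sig 3 x := by rw [← hsig, hc3]
  rcases fiber3 c x hc3 with rfl | hc | hc
  · exact absurd hcC hxC
  all_goals rcases fiber3 y x hy3 with rfl | hy | hy
  · exact absurd hyC hxC
  · exact absurd (hc.trans hy.symm) hcy
  · exact ⟨hc ▸ hcC, hy ▸ hyC⟩
  · exact absurd hyC hxC
  · exact ⟨hy ▸ hyC, hc ▸ hcC⟩
  · exact absurd (hc.trans hy.symm) hcy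

lemma sig_thirds (x : S1) :
    sig 3 (x + ((1/3 : ℝ) : S1)) = sig 3 (x + ((2/3 : ℝ) : S1)) := by
  simp only [sig, smul_add]
  congr 1
  rw [← AddCircle.coe_nsmul, ← AddCircle.coe_nsmul]
  norm_num
  rw [show ((1:ℝ) : S1) = ((1:ℤ) : ℝ) by norm_num, show ((2:ℝ) : S1) = ((2:ℤ) : ℝ) by norm_num,
    int_zero, int_zero]

/-- If the co-critical sets of two admissible critical sets C and K share a vertex x,
then the critical chord joining x + 1/3 and x + 2/3 is contained in both C and K
(its endpoints are vertices of both). -/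
theorem stmt11 (C K : Set S1) (hC : Admissible C) (hK : Admissible K)
    (x : S1) (hx : x ∈ Cocrit C ∩ Cocrit K) :
    sig 3 (x + ((1 / 3 : ℝ) : S1)) = sig 3 (x + ((2 / 3 : ℝ) : S1)) ∧
    x + ((1 / 3 : ℝ) : S1) ∈ C ∧ x + ((2 / 3 : ℝ) : S1) ∈ C ∧
    x + ((1 / 3 : ℝ) : S1) ∈ K ∧ x + ((2 / 3 : ℝ) : S1) ∈ K := by
  obtain ⟨hxC, hxK⟩ := hx
  obtain ⟨h1, h2⟩ := main_half C hC.2.2.1 x hxC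
  obtain ⟨h3, h4⟩ := main_half K hK.2.2.1 x hxK
  exact ⟨sig_thirds x, h1, h2, h3, h4⟩
end
end

section
/- Let d ≥ 2 and σ_d(x)=d·x on ℝ/ℤ. Suppose Λ is a σ_d-invariant geolamination with the sibling property, and suppose ℓ = xy is a leaf of Λ with x periodic under σ_d and y not periodic. Then the equivalence class of x under the relation 'connected by a finite concatenation of leaves of Λ' is infinite. -/
open Function

noncomputable section

/-- A sibling σ_d-invariant geolamination: a closed family of pairwise unlinked chords
(encoded as ordered pairs, symmetric) containing all degenerate chords, closed under
taking images, having preimage leaves, and with d pairwise disjoint siblings for each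
leaf with nondegenerate image. -/
structure Geolam (d : ℕ) where
  leaves : Set (S1 × S1)
  symm : ∀ a b : S1, (a, b) ∈ leaves → (b, a) ∈ leaves
  degenerate_mem : ∀ x : S1, (x, x) ∈ leaves
  pairwise_unlinked : ∀ p ∈ leaves, ∀ q ∈ leaves, ¬ Linked p.1 p.2 q.1 q.2
  closed : IsClosed leaves
  forward : ∀ p ∈ leaves, (sig d p.1, sig d p.2) ∈ leaves
  pullback : ∀ p ∈ leaves, ∃ q ∈ leaves, (sig d q.1, sig d q.2) = p
  siblings : ∀ p ∈ leaves, sig d p.1 ≠ sig d p.2 →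
    ∃ s : Fin d → S1 × S1, (∃ i, s i = p) ∧
      (∀ i, s i ∈ leaves ∧ sig d (s i).1 = sig d p.1 ∧ sig d (s i).2 = sig d p.2) ∧
      ∀ i j, i ≠ j → ({(s i).1, (s i).2} : Set S1) ∩ {(s j).1, (s j).2} = ∅

/-- Classification of d-torsion points on the circle. -/
lemma ker_classify (d : ℕ) (hd : 0 < d) (w : S1) (hw : d • w = 0) :
    ∃ k : ℕ, k < d ∧ w = (((k : ℝ) / d : ℝ) : S1) := by
  obtain ⟨r, hr⟩ : ∃ r : Set.Ico (0:ℝ) (0+1), ((r : ℝ) : S1) = w :=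
    ⟨AddCircle.equivIco 1 0 w, (AddCircle.equivIco 1 0).symm_apply_apply w⟩
  have hr0 : (0:ℝ) ≤ (r:ℝ) := r.2.1
  have hr1 : (r:ℝ) < 1 := by simpa using r.2.2
  rw [← hr, ← AddCircle.coe_nsmul, AddCircle.coe_eq_zero_iff] at hw
  obtain ⟨m, hm⟩ := hw
  have hm' : (m : ℝ) = d * r := by
    have : (d:ℝ) * r = m := by simpa [nsmul_eq_mul] using hm.symm
    linarith
  have hd' : (0:ℝ) < d := by exact_mod_cast hd
  have hmlt : (m:ℝ) < d := by rw [hm']; nlinarith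
  have hmge : (0:ℝ) ≤ (m:ℝ) := by rw [hm']; positivity
  have hm0 : 0 ≤ m := by exact_mod_cast hmge
  have hmd : m < d := by exact_mod_cast hmlt
  refine ⟨m.toNat, by omega, ?_⟩
  rw [← hr]
  congr 1
  have : ((m.toNat : ℝ)) = (m : ℝ) := by
    exact_mod_cast Int.toNat_of_nonneg hm0
  rw [this, hm']
  field_simp

/-- One-step pullback through a chosen preimage of an endpoint. -/
lemma pull_one (d : ℕ) (hd : 0 < d) (Λ : Geolam d) (a b a' : S1)
    (h : (a, b) ∈ Λ.leaves) (hab : a ≠ b) (ha' : sig d a' = a) :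
    ∃ b', (a', b') ∈ Λ.leaves ∧ sig d b' = b := by
  obtain ⟨q, hq, hq2⟩ := Λ.pullback (a, b) h
  have hq1 : sig d q.1 = a := by rw [Prod.ext_iff] at hq2; exact hq2.1
  have hq2' : sig d q.2 = b := by rw [Prod.ext_iff] at hq2; exact hq2.2
  have hne : sig d q.1 ≠ sig d q.2 := by rw [hq1, hq2']; exact hab
  obtain ⟨s, -, hall, hdisj⟩ := Λ.siblings q hq hne
  -- each sibling's first endpoint is a preimage of a
  have hfib : ∀ i, d • ((s i).1 - a') = 0 := by
    intro i
    have h1 : sig d (s i).1 = a := by rw [(hall i).2.1, hq1]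
    have : d • (s i).1 = d • a' := by
      change sig d (s i).1 = sig d a'; rw [h1, ha']
    rw [nsmul_sub, this, sub_self]
  choose k hk hk2 using fun i => ker_classify d hd _ (hfib i)
  -- i ↦ k i is injective into Fin d, hence surjective; some sibling has first endpoint a'
  have hfst : ∀ i j : Fin d, i ≠ j → (s i).1 ≠ (s j).1 := by
    intro i j hij heq
    have := hdisj i j hij
    have hmem : (s i).1 ∈ ({(s i).1, (s i).2} : Set S1) ∩ {(s j).1, (s j).2} := by
      constructor
      · left; rfl
      · left; exact heq
    rw [this] at hmem
    exact hmem
  have hinj : Function.Injective (fun i : Fin d => (⟨k i, hk i⟩ : Fin d)) := by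
    intro i j hij
    simp only [Fin.mk.injEq] at hij
    by_contra hne'
    apply hfst i j hne'
    have : (s i).1 - a' = (s j).1 - a' := by rw [hk2 i, hk2 j, hij]
    have := sub_left_injective this
    exact this
  have hsurj := Finite.injective_iff_surjective.mp hinj
  obtain ⟨i, hi⟩ := hsurj ⟨0, hd⟩
  have hki : k i = 0 := by simpa [Fin.ext_iff] using hi
  have hi1 : (s i).1 = a' := by
    have := hk2 i
    rw [hki] at this
    simp at this
    exact sub_eq_zero.mp this
  refine ⟨(s i).2, ?_, ?_⟩
  · rw [← hi1]; exact (hall i).1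
  · rw [(hall i).2.2, hq2']

/-- m-step pullback through a chosen m-fold preimage of an endpoint. -/
lemma pull_many (d : ℕ) (hd : 0 < d) (Λ : Geolam d) :
    ∀ (m : ℕ) (a b a' : S1), (a, b) ∈ Λ.leaves → a ≠ b → (sig d)^[m] a' = a →
      ∃ b', (a', b') ∈ Λ.leaves ∧ (sig d)^[m] b' = b := by
  intro m
  induction m with
  | zero =>
    intro a b a' h _ ha'
    simp only [Function.iterate_zero, id] at ha' ⊢
    exact ⟨b, by rwa [ha'], rfl⟩
  | succ m ih =>
    intro a b a' h hab ha'
    rw [Function.iterate_succ_apply] at ha'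
    obtain ⟨b'', hb''1, hb''2⟩ := ih a b (sig d a') h hab ha'
    have hne2 : sig d a' ≠ b'' := by
      intro heq
      apply hab
      rw [← ha', heq, hb''2]
    obtain ⟨b', hb'1, hb'2⟩ := pull_one d hd Λ (sig d a') b'' a' hb''1 hne2 rfl
    exact ⟨b', hb'1, by rw [Function.iterate_succ_apply, hb'2, hb''2]⟩

/-- If a leaf of a sibling σ_d-invariant geolamination has a periodic endpoint x and a
non-periodic endpoint y, then the class of x under "connected by a finite concatenation
of leaves" is infinite. -/
theorem stmt13 (d : ℕ) (hd : 2 ≤ d) (Λ : Geolam d) (x y : S1)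
    (hxy : (x, y) ∈ Λ.leaves) (hne : x ≠ y)
    (hxper : ∃ n : ℕ, 0 < n ∧ (sig d)^[n] x = x)
    (hyper : ∀ n : ℕ, 0 < n → (sig d)^[n] y ≠ y) :
    {z : S1 | Relation.ReflTransGen (fun u v => (u, v) ∈ Λ.leaves) x z}.Infinite := by
  obtain ⟨n, hn, hper⟩ := hxper
  have hd0 : 0 < d := by omega
  have hfix : ∀ k : ℕ, (sig d)^[n * k] x = x := by
    intro k
    rw [Function.iterate_mul]
    exact Function.iterate_fixed hper k
  have key : ∀ k : ℕ, ∃ b', (x, b') ∈ Λ.leaves ∧ (sig d)^[n * k] b' = y :=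
    fun k => pull_many d hd0 Λ (n * k) x y x hxy hne (hfix k)
  choose f hf1 hf2 using key
  have hstep : ∀ k m : ℕ, k < m → f k ≠ f m := by
    intro k m hkm heq
    have harith : n * (m - k) + n * k = n * m := by
      rw [← Nat.mul_add, Nat.sub_add_cancel hkm.le]
    have h1 : (sig d)^[n * (m - k)] y = y := by
      have : (sig d)^[n * (m - k)] ((sig d)^[n * k] (f m)) = y := by
        rw [← Function.iterate_add_apply, harith]
        exact hf2 m
      rwa [← heq, hf2 k] at this
    exact hyper (n * (m - k)) (Nat.mul_pos hn (by omega)) h1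
  have hinj : Function.Injective f := by
    intro a b hab
    by_contra hne'
    rcases lt_or_gt_of_ne hne' with h | h
    · exact hstep a b h hab
    · exact hstep b a h hab.symm
  exact Set.infinite_of_injective_forall_mem hinj
    (fun k => Relation.ReflTransGen.single (hf1 k))
end
end

section
/- Let d ≥ 2 and σ_d(x)=d·x on ℝ/ℤ. Suppose G is a periodic gap of period n of a σ_d-invariant geolamination whose first-return map σ_d^n restricted to the boundary circle points G' = G ∩ (ℝ/ℤ) is monotonically semiconjugate (via a monotone degree-one circle map φ) to an irrational rotation. Then every fiber of φ that is a union of consecutive edges of G contains only finitely many edges, given that every edge of G is precritical (some iterate degenerate) and that the irrational rotation has no periodic points. -/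
open Function

noncomputable section

/-- `(a,b)` is an edge of the convex hull of the circle set `G`: both endpoints are in `G`,
they are distinct, and one of the open arcs they cut off contains no point of `G`. -/
def IsEdge (G : Set S1) (a b : S1) : Prop :=
  a ∈ G ∧ b ∈ G ∧ a ≠ b ∧ ∀ c ∈ G, ¬ sbtw a c b


/-!
Write `K = d ^ n`, so that the first return map is `x ↦ K • x`. If an edge `(a, b)` of the fiber
over `t` is first collapsed by the `(k + 1)`-st return, its images `u ≠ v` after `k` returns lie in
the fiber over `t + k • α` and satisfy `K • u = K • v`. A monotone surjection is constant on one of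
the two arcs between points of a fiber, and the arc `[u, v)` contains a `K`-torsion point, so the
fiber over `t + k • α` meets the finite set of `K`-torsion points. The points `t + k • α` are
pairwise distinct, hence only finitely many levels `k` occur, and some power `D` of `K` collapses
every edge of the fiber over `t`. Finally the arcs `[a, b)` of distinct edges are disjoint and each
contains a `D`-torsion point, so there are only finitely many such edges.
-/

open Set

section CircularOrder

variable {α β : Type*} [CircularOrder α] [CircularOrder β]

theorem sbtw_or_sbtw_of_ne {a b c : α} (hab : a ≠ b) (hbc : b ≠ c) (hca : c ≠ a) :
    sbtw a b c ∨ sbtw c b a := by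
  rcases btw_total a b c with h | h
  · refine .inl <| sbtw_of_btw_not_btw h fun h' => ?_
    rcases h.antisymm h' with h'' | h'' | h'' <;> contradiction
  · refine .inr <| sbtw_of_btw_not_btw h fun h' => ?_
    rcases h.antisymm h' with h'' | h'' | h'' <;> simp_all [eq_comm]

theorem eq_or_eq_of_sbtw_of_sbtw {φ : α → β} (hφ : ∀ p q r, btw p q r → btw (φ p) (φ q) (φ r))
    {t : β} {u v w x : α} (hu : φ u = t) (hv : φ v = t) (hw : sbtw u w v) (hx : sbtw v x u) :
    φ w = t ∨ φ x = t ∨ φ w = φ x := by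
  have hwvx : btw w v x :=
    btw_of_sbtw <| sbtw_cyclic_right <| sbtw_trans_right hx (sbtw_cyclic_right hw)
  have hxuw : btw x u w :=
    btw_of_sbtw <| sbtw_cyclic_right <| sbtw_trans_right hw (sbtw_cyclic_right hx)
  have h₁ := hφ _ _ _ hwvx
  have h₂ := hφ _ _ _ hxuw
  rw [hv] at h₁
  rw [hu] at h₂
  rcases h₁.antisymm h₂ with h | h | h
  · exact .inl h
  · exact .inr (.inl h.symm)
  · exact .inr (.inr h.symm)

theorem cIoo_subset_fiber_or {φ : α → β} [Infinite β]
    (hφ : ∀ p q r, btw p q r → btw (φ p) (φ q) (φ r)) (hsurj : Surjective φ) {t : β} {u v : α}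
    (hu : φ u = t) (hv : φ v = t) :
    cIoo u v ⊆ φ ⁻¹' {t} ∨ cIoo v u ⊆ φ ⁻¹' {t} := by
  classical
  by_contra! h
  obtain ⟨⟨w, hw, hwt⟩, ⟨x, hx, hxt⟩⟩ := And.imp not_subset.mp not_subset.mp h
  rw [mem_cIoo] at hw hx
  simp only [mem_preimage, mem_singleton_iff] at hwt hxt
  have hwx : φ w = φ x := by
    rcases eq_or_eq_of_sbtw_of_sbtw hφ hu hv hw hx with h | h | h
    exacts [absurd h hwt, absurd h hxt, h]
  have huv : u ≠ v := by rintro rfl; exact sbtw_irrefl_left_right hw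
  have hrange : ∀ z, φ z = t ∨ φ z = φ x := by
    intro z
    by_cases hzu : z = u
    · exact .inl (hzu ▸ hu)
    by_cases hzv : z = v
    · exact .inl (hzv ▸ hv)
    rcases sbtw_or_sbtw_of_ne (Ne.symm hzu) hzv huv.symm with hz | hz
    · rcases eq_or_eq_of_sbtw_of_sbtw hφ hu hv hz hx with h | h | h
      exacts [.inl h, absurd h hxt, .inr h]
    · rcases eq_or_eq_of_sbtw_of_sbtw hφ hu hv hw hz with h | h | h
      exacts [absurd h hwt, .inl h, .inr (h.symm.trans hwx)]
  obtain ⟨y, hy⟩ := Infinite.exists_notMem_finset {t, φ x}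
  obtain ⟨z, rfl⟩ := hsurj y
  simp only [Finset.mem_insert, Finset.mem_singleton, not_or] at hy
  exact (hrange z).elim hy.1 hy.2

end CircularOrder

namespace AddCircle

variable {p : ℝ} [hp : Fact (0 < p)]

instance : Infinite (AddCircle p) :=
  (equivIco p 0).infinite_iff.mpr (Ico_infinite (by simpa using hp.out)).to_subtype

theorem sbtw_coe_of_lt {x y z : ℝ} (hxy : x < y) (hyz : y < z) (hzx : z < x + p) :
    sbtw (x : AddCircle p) y z := by
  rw [sbtw_iff_not_btw, QuotientAddGroup.btw_coe_iff, ← toIcoMod_add_right, ← toIocMod_add_right,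
    (toIcoMod_eq_self _).mpr ⟨by linarith, by linarith⟩,
    (toIocMod_eq_self _).mpr ⟨by linarith, by linarith⟩]
  linarith

/-- The arc `[u, v)` has length at least `p / K`, so rounding a lift of `u` up to the lattice
`(p / K) ℤ` lands in it. -/
theorem exists_nsmul_eq_zero_mem_arc {K : ℕ} (hK : 0 < K) {u v : AddCircle p} (huv : u ≠ v)
    (h : K • u = K • v) : ∃ w : AddCircle p, K • w = 0 ∧ (w = u ∨ sbtw u w v) := by
  obtain ⟨x, rfl⟩ := QuotientAddGroup.mk_surjective u
  obtain ⟨⟨y, hy₁, hy₂⟩, rfl⟩ : ∃ y : Ico x (x + p), ((y : ℝ) : AddCircle p) = v :=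
    ⟨equivIco p x v, by simp⟩
  have hK' : (0 : ℝ) < K := by exact_mod_cast hK
  have hp' := hp.out
  have hxy : x < y := lt_of_le_of_ne hy₁ (by rintro rfl; exact huv rfl)
  have hlen : p ≤ K * (y - x) := by
    obtain ⟨m, hm⟩ := (coe_eq_zero_iff p).mp <| show ((K • (y - x) : ℝ) : AddCircle p) = 0 by
      rw [coe_nsmul, coe_sub, smul_sub, h, sub_self]
    have hm₀ : (0 : ℝ) < m := by
      have : (0 : ℝ) < m * p := by rw [← zsmul_eq_mul, hm, nsmul_eq_mul]; nlinarith
      exact pos_of_mul_pos_left this hp'.le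
    have hm₁ : (1 : ℝ) ≤ m := by exact_mod_cast (show (0 : ℤ) < m by exact_mod_cast hm₀)
    rw [← nsmul_eq_mul, ← hm, zsmul_eq_mul]
    nlinarith
  set c : ℝ := ⌈K * x / p⌉ * p / K with hc
  have hxc : x ≤ c :=
    calc x = K * x / p * p / K := by field_simp
      _ ≤ c := by rw [hc]; gcongr; exact Int.le_ceil _
  have hcx : c < x + p / K := by
    rw [hc, div_lt_iff₀ hK', ← lt_div_iff₀ hp']
    have := Int.ceil_lt_add_one (K * x / p)
    field_simp at this ⊢; linarith
  refine ⟨c, ?_, ?_⟩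
  · rw [← coe_nsmul, coe_eq_zero_iff]
    exact ⟨⌈K * x / p⌉, by rw [hc, nsmul_eq_mul, zsmul_eq_mul]; field_simp⟩
  · rcases hxc.eq_or_lt with hxc | hxc
    · exact .inl (by rw [hxc])
    · refine .inr (sbtw_coe_of_lt hxc ?_ hy₂)
      calc c < x + p / K := hcx
        _ ≤ y := by linarith [(div_le_iff₀' hK').mpr hlen]

theorem exists_nsmul_eq_zero_mem_fiber {β : Type*} [CircularOrder β] [Infinite β]
    {φ : AddCircle p → β} (hφ : ∀ x y z, btw x y z → btw (φ x) (φ y) (φ z))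
    (hsurj : Surjective φ) {K : ℕ} (hK : 0 < K)
    {t : β} {u v : AddCircle p} (huv : u ≠ v) (h : K • u = K • v) (hu : φ u = t) (hv : φ v = t) :
    ∃ w : AddCircle p, K • w = 0 ∧ φ w = t := by
  wlog harc : cIoo u v ⊆ φ ⁻¹' {t} generalizing u v
  · exact this huv.symm h.symm hv hu ((cIoo_subset_fiber_or hφ hsurj hu hv).resolve_left harc)
  obtain ⟨w, hw, rfl | huwv⟩ := exists_nsmul_eq_zero_mem_arc hK huv h
  exacts [⟨w, hw, hu⟩, ⟨w, hw, harc huwv⟩]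

end AddCircle

namespace IsEdge

variable {G : Set S1} {a b a' b' : S1}

theorem snd_eq (h : IsEdge G a b) (h' : IsEdge G a b') : b = b' := by
  by_contra hbb'
  rcases sbtw_or_sbtw_of_ne h.2.2.1 hbb' h'.2.2.1.symm with hb | hb
  · exact h'.2.2.2 b h.2.1 hb
  · exact h.2.2.2 b' h'.2.1 (sbtw_cyclic_left (sbtw_cyclic_left hb))

theorem fst_eq_of_mem_arc (h : IsEdge G a b) (h' : IsEdge G a' b') {x : S1}
    (hx : x = a ∨ sbtw a x b) (hx' : x = a' ∨ sbtw a' x b') : a = a' := by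
  rcases hx with rfl | hx <;> rcases hx' with rfl | hx'
  · rfl
  · exact (h'.2.2.2 _ h.1 hx').elim
  · exact (h.2.2.2 _ h'.1 hx).elim
  by_contra haa'
  have ha'x : a' ≠ x := by rintro rfl; exact sbtw_irrefl_left hx'
  have hxa : x ≠ a := by rintro rfl; exact sbtw_irrefl_left hx
  rcases sbtw_or_sbtw_of_ne haa' ha'x hxa with ha' | ha
  · exact h.2.2.2 a' h'.1 (sbtw_trans_right ha' hx)
  · exact h'.2.2.2 a h.1 (sbtw_trans_right (sbtw_cyclic_left ha) hx')

end IsEdge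

theorem finite_edges_of_nsmul_eq (G : Set S1) {D : ℕ} (hD : 0 < D) :
    {e : S1 × S1 | IsEdge G e.1 e.2 ∧ D • e.1 = D • e.2}.Finite := by
  have harc : ∀ e ∈ {e : S1 × S1 | IsEdge G e.1 e.2 ∧ D • e.1 = D • e.2},
      ∃ w : S1, D • w = 0 ∧ (w = e.1 ∨ sbtw e.1 w e.2) :=
    fun e he => AddCircle.exists_nsmul_eq_zero_mem_arc hD he.1.2.2.1 he.2
  choose! w hw using harc
  refine (AddCircle.finite_torsion 1 hD).of_injOn (fun e he => (hw e he).1) ?_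
  intro e he e' he' hee'
  have hfst := he.1.fst_eq_of_mem_arc he'.1 (hw e he).2 (hee' ▸ (hw e' he').2)
  exact Prod.ext hfst (he.1.snd_eq (hfst ▸ he'.1))

theorem nsmul_eq_nsmul_of_dvd {M : Type*} [AddMonoid M] {m m' : ℕ} {a b : M} (hmm' : m ∣ m')
    (h : m • a = m • b) : m' • a = m' • b := by
  obtain ⟨c, rfl⟩ := hmm'
  rw [mul_comm, mul_nsmul', h, ← mul_nsmul']

namespace Function

variable {α : Type*} {f : α → α} {a b : α}

theorem exists_iterate_ne_and_iterate_succ_eq (hab : a ≠ b) {m : ℕ} (h : f^[m] a = f^[m] b) :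
    ∃ k, f^[k] a ≠ f^[k] b ∧ f^[k + 1] a = f^[k + 1] b := by
  induction m with
  | zero => exact (hab h).elim
  | succ m ih =>
    by_cases hm : f^[m] a = f^[m] b
    exacts [ih hm, ⟨m, hm, h⟩]

end Function

theorem Set.MapsTo.apply_iterate_eq_add_nsmul {α M : Type*} [AddMonoid M] {f : α → α} {s : Set α}
    {φ : α → M} {c : M} (hf : MapsTo f s s) (hφ : ∀ x ∈ s, φ (f x) = φ x + c) (k : ℕ) {x : α}
    (hx : x ∈ s) : φ (f^[k] x) = φ x + k • c := by
  induction k with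
  | zero => simp
  | succ k ih => rw [iterate_succ_apply', hφ _ (hf.iterate k hx), ih, succ_nsmul, add_assoc]

theorem sig_iterate (d m : ℕ) : (sig d)^[m] = (d ^ m • ·) := smul_iterate d m

theorem exists_collapse_level {G : Set S1} {φ : S1 → S1} {α t : S1} {K : ℕ} (hK : 0 < K)
    (hG : ∀ x ∈ G, K • x ∈ G) (hsemi : ∀ x ∈ G, φ (K • x) = φ x + α)
    (hφ : ∀ p q r, btw p q r → btw (φ p) (φ q) (φ r)) (hsurj : Surjective φ) {a b : S1}
    (ha : a ∈ G) (hb : b ∈ G) (hab : a ≠ b) (hφa : φ a = t) (hφb : φ b = t) {m : ℕ}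
    (hm : K ^ m • a = K ^ m • b) :
    ∃ k : ℕ, (∃ w : S1, K • w = 0 ∧ φ w = t + k • α) ∧ K ^ (k + 1) • a = K ^ (k + 1) • b := by
  obtain ⟨k, hne, hcol⟩ := exists_iterate_ne_and_iterate_succ_eq (f := (K • ·)) hab
    (by rwa [smul_iterate])
  simp only [smul_iterate] at hne hcol
  have hφk : ∀ x ∈ G, φ x = t → φ (K ^ k • x) = t + k • α := by
    intro x hx hφx
    rw [← hφx, ← (show MapsTo (K • ·) G G from hG).apply_iterate_eq_add_nsmul hsemi k hx,
      smul_iterate]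
  refine ⟨k, AddCircle.exists_nsmul_eq_zero_mem_fiber hφ hsurj hK hne ?_ (hφk a ha hφa)
    (hφk b hb hφb), hcol⟩
  rwa [← mul_smul, ← mul_smul, ← pow_succ']

theorem stmt16_general (d n : ℕ) (hd : 2 ≤ d) (hn : 0 < n)
    (G : Set S1) (hGinv : ∀ x ∈ G, (sig d)^[n] x ∈ G)
    (φ : S1 → S1) (α : S1)
    (hirr : ∀ m : ℕ, 0 < m → m • α ≠ 0)
    (hsurj : Function.Surjective φ)
    (hmono : ∀ p q r : S1, btw p q r → btw (φ p) (φ q) (φ r))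
    (hsemi : ∀ x ∈ G, φ ((sig d)^[n] x) = φ x + α)
    (hpre : ∀ a b : S1, IsEdge G a b → ∃ m : ℕ, (sig d)^[m] a = (sig d)^[m] b) :
    ∀ t : S1, {e : S1 × S1 | IsEdge G e.1 e.2 ∧ φ e.1 = t ∧ φ e.2 = t}.Finite := by
  intro t
  have hK : 0 < d ^ n := pow_pos (by omega) n
  simp only [sig_iterate] at hGinv hsemi hpre
  have hlevels : {k : ℕ | ∃ w : S1, d ^ n • w = 0 ∧ φ w = t + k • α}.Finite := by
    have hinj : Injective fun k : ℕ => t + k • α :=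
      (add_right_injective t).comp <| injective_nsmul_iff_not_isOfFinAddOrder.mpr <| by
        simpa [isOfFinAddOrder_iff_nsmul_eq_zero] using hirr
    refine (((AddCircle.finite_torsion 1 hK).image φ).preimage hinj.injOn).subset ?_
    rintro k ⟨w, hw, hφw⟩
    exact ⟨w, hw, hφw⟩
  obtain ⟨B, hB⟩ := hlevels.bddAbove
  refine (finite_edges_of_nsmul_eq G (pow_pos hK (B + 1))).subset ?_
  rintro ⟨a, b⟩ ⟨he, ha, hb⟩
  obtain ⟨m, hm⟩ := hpre a b he
  have hm' : (d ^ n) ^ m • a = (d ^ n) ^ m • b :=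
    nsmul_eq_nsmul_of_dvd (by rw [← pow_mul]; exact pow_dvd_pow d (Nat.le_mul_of_pos_left m hn)) hm
  obtain ⟨k, hk, hcol⟩ :=
    exists_collapse_level hK hGinv hsemi hmono hsurj he.1 he.2.1 he.2.2.1 ha hb hm'
  exact ⟨he, nsmul_eq_nsmul_of_dvd (pow_dvd_pow _ (by have := hB hk; omega)) hcol⟩

/-- Let G be the circle part of a periodic gap of period n whose first-return map is
monotonically semiconjugate (by a monotone continuous degree-one surjection φ) to an
irrational rotation by α. If every edge of G is precritical, then every fiber of φ
contains only finitely many edges of G. -/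
theorem stmt16 (d n : ℕ) (hd : 2 ≤ d) (hn : 0 < n)
    (G : Set S1) (hGinv : ∀ x ∈ G, (sig d)^[n] x ∈ G)
    (φ : S1 → S1) (α : S1)
    (hirr : ∀ m : ℕ, 0 < m → m • α ≠ 0)
    (hcont : Continuous φ) (hsurj : Function.Surjective φ)
    (hmono : ∀ p q r : S1, btw p q r → btw (φ p) (φ q) (φ r))
    (hsemi : ∀ x ∈ G, φ ((sig d)^[n] x) = φ x + α)
    (hpre : ∀ a b : S1, IsEdge G a b → ∃ m : ℕ, (sig d)^[m] a = (sig d)^[m] b) :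
    ∀ t : S1, {e : S1 × S1 | IsEdge G e.1 e.2 ∧ φ e.1 = t ∧ φ e.2 = t}.Finite :=
  stmt16_general d n hd hn G hGinv φ α hirr hsurj hmono hsemi hpre
end
end

section
/- Let α ∈ ℝ/ℤ be irrational and R_α the rotation by α. Suppose f : ℝ/ℤ → ℝ/ℤ and φ : ℝ/ℤ → ℝ/ℤ is a monotone degree-one continuous surjection with φ ∘ f = R_α ∘ φ. Then for any two points u, v with φ(u) ≠ φ(v), the chords joining f^n(u) and f^n(v) for n ≥ 0 cannot be pairwise unlinked: there exist m < n such that the chord f^m(u)f^m(v) and the chord f^n(u)f^n(v) cross in the open unit disk. -/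
open Function

noncomputable section

lemma toIcoMod_self_of' {u : ℝ} (h0 : 0 ≤ u) (h1 : u < 1) :
    toIcoMod (one_pos : (0:ℝ) < 1) 0 u = u :=
  (toIcoMod_eq_self one_pos).2 ⟨h0, by linarith⟩

lemma toIocMod_self_of' {u : ℝ} (h0 : 0 < u) (h1 : u ≤ 1) :
    toIocMod (one_pos : (0:ℝ) < 1) 0 u = u :=
  (toIocMod_eq_self one_pos).2 ⟨h0, by linarith⟩

lemma sbtw_coe (x : ℝ) {u w : ℝ} (h0 : 0 < u) (huw : u < w) (h1 : w < 1) :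
    sbtw (↑x : S1) ↑(x + u) ↑(x + w) := by
  rw [sbtw_iff_btw_not_btw]
  constructor
  · rw [QuotientAddGroup.btw_coe_iff']
    have e1 : x + u - x = u := by ring
    have e2 : x + w - x = w := by ring
    rw [e1, e2, toIcoMod_self_of' h0.le (huw.trans h1), toIocMod_self_of' (h0.trans huw) h1.le]
    exact huw.le
  · rw [QuotientAddGroup.btw_coe_iff']
    have e1 : x + u - (x + w) = (u - w + 1) - 1 := by ring
    have e2 : x - (x + w) = (1 - w) - 1 := by ring
    rw [e1, e2]
    have r1 : toIcoMod (one_pos : (0:ℝ) < 1) 0 ((u - w + 1) - 1) = u - w + 1 := by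
      rw [show (u - w + 1) - 1 = (u - w + 1) - (1:ℤ) • (1:ℝ) by simp, toIcoMod_sub_zsmul]
      exact toIcoMod_self_of' (by linarith) (by linarith)
    have r2 : toIocMod (one_pos : (0:ℝ) < 1) 0 ((1 - w) - 1) = 1 - w := by
      rw [show (1 - w) - 1 = (1 - w) - (1:ℤ) • (1:ℝ) by simp, toIocMod_sub_zsmul]
      exact toIocMod_self_of' (by linarith) (by linarith)
    rw [r1, r2]
    intro h
    linarith

/-- Density of the forward orbit of an "irrational" point of the circle. -/
lemma denseRange_nsmul_irr (α : S1) (hirr : ∀ m : ℕ, 0 < m → m • α ≠ 0) :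
    DenseRange (fun n : ℕ => n • α) := by
  rw [← denseRange_zsmul_iff_nsmul]
  induction α using QuotientAddGroup.induction_on with
  | H a =>
  set π : ℝ →+ S1 := QuotientAddGroup.mk' (AddSubgroup.zmultiples (1:ℝ)) with hπ
  rcases AddSubgroup.dense_or_cyclic (AddSubgroup.closure ({a, 1} : Set ℝ)) with hd | ⟨g, hg⟩
  · -- dense case
    have hsurj : DenseRange (π : ℝ → S1) := (QuotientAddGroup.mk'_surjective _).denseRange
    have hcont : Continuous (π : ℝ → S1) := continuous_quotient_mk'
    have himg : Dense ((π : ℝ → S1) '' (AddSubgroup.closure ({a, 1} : Set ℝ))) :=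
      hsurj.dense_image hcont hd
    have hset : ((π : ℝ → S1) '' (AddSubgroup.closure ({a, 1} : Set ℝ)))
        = Set.range (fun z : ℤ => z • (↑a : S1)) := by
      have h1 : (AddSubgroup.closure ({a, 1} : Set ℝ)).map π
          = AddSubgroup.closure ((π : ℝ → S1) '' {a, 1}) := AddMonoidHom.map_closure π _
      have h2 : (π : ℝ → S1) '' {a, 1} = {(↑a : S1), 0} := by
        rw [Set.image_pair]
        congr 1
        simp only [Set.singleton_eq_singleton_iff]
        exact (AddCircle.coe_eq_zero_iff _).2 ⟨1, by simp⟩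
      have h3 : AddSubgroup.closure ({(↑a : S1), 0} : Set S1)
          = AddSubgroup.closure {(↑a : S1)} := by
        apply le_antisymm
        · rw [AddSubgroup.closure_le]
          rintro y (rfl | rfl)
          · exact AddSubgroup.subset_closure rfl
          · exact (AddSubgroup.closure _).zero_mem
        · exact AddSubgroup.closure_mono (by simp)
      ext y
      constructor
      · intro hy
        have : y ∈ (AddSubgroup.closure ({a, 1} : Set ℝ)).map π := by
          rcases hy with ⟨z, hz, rfl⟩; exact ⟨z, hz, rfl⟩
        rw [h1, h2, h3] at this
        rcases AddSubgroup.mem_closure_singleton.1 this with ⟨n, hn⟩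
        exact ⟨n, hn⟩
      · rintro ⟨n, rfl⟩
        have : (n • (↑a : S1)) ∈ (AddSubgroup.closure ({a, 1} : Set ℝ)).map π := by
          rw [h1, h2, h3]
          exact AddSubgroup.mem_closure_singleton.2 ⟨n, rfl⟩
        rcases this with ⟨z, hz, hzz⟩
        exact ⟨z, hz, hzz⟩
    rw [hset] at himg
    exact himg
  · -- cyclic case: contradiction with irrationality
    exfalso
    have ha : a ∈ AddSubgroup.closure ({a, 1} : Set ℝ) := AddSubgroup.subset_closure (by simp)
    have h1 : (1:ℝ) ∈ AddSubgroup.closure ({a, 1} : Set ℝ) := AddSubgroup.subset_closure (by simp)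
    rw [hg] at ha h1
    rcases AddSubgroup.mem_closure_singleton.1 ha with ⟨m, hm⟩
    rcases AddSubgroup.mem_closure_singleton.1 h1 with ⟨n, hn⟩
    have hn0 : n ≠ 0 := by
      rintro rfl
      simp at hn
    have key : (n • a : ℝ) = (m : ℝ) := by
      rw [← hm, smul_comm, hn]
      simp
    have hz : (n : ℤ) • (↑a : S1) = 0 := by
      have h' : ((n • a : ℝ) : S1) = (n : ℤ) • (↑a : S1) := map_zsmul π n a
      rw [← h', key]
      exact (AddCircle.coe_eq_zero_iff _).2 ⟨m, by simp⟩
    have hk : (n.natAbs : ℕ) • (↑a : S1) = 0 := by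
      have habs : ((n.natAbs : ℤ)) • (↑a : S1) = 0 := by
        rcases Int.natAbs_eq n with h | h
        · rw [← h]; exact hz
        · have := hz
          rw [h, neg_zsmul, neg_eq_zero] at this
          exact this
      rw [natCast_zsmul] at habs
      exact habs
    exact hirr n.natAbs (Int.natAbs_pos.2 hn0) hk

/-- Strict betweenness lifts along a monotone semiconjugacy. -/
lemma sbtw_lift_s17 {φ : S1 → S1} (hmono : ∀ p q r : S1, btw p q r → btw (φ p) (φ q) (φ r))
    {p q r : S1} (h : sbtw (φ p) (φ q) (φ r)) : sbtw p q r := by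
  rw [sbtw_iff_btw_not_btw] at h ⊢
  constructor
  · rcases btw_total p q r with hb | hb
    · exact hb
    · exact absurd (hmono _ _ _ hb) h.2
  · intro hb
    exact h.2 (hmono _ _ _ hb)

/-- If f is monotonically semiconjugate (by a monotone continuous degree-one surjection
φ) to an irrational rotation by α, then for any two points u, v in different fibers of
φ, the chords joining f^n(u) and f^n(v) cannot be pairwise unlinked: two of them cross. -/
theorem stmt17 (f φ : S1 → S1) (α : S1)
    (hirr : ∀ m : ℕ, 0 < m → m • α ≠ 0)
    (hcont : Continuous φ) (hsurj : Function.Surjective φ)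
    (hmono : ∀ p q r : S1, btw p q r → btw (φ p) (φ q) (φ r))
    (hsemi : ∀ x : S1, φ (f x) = φ x + α)
    (u v : S1) (huv : φ u ≠ φ v) :
    ∃ m n : ℕ, m < n ∧ Linked (f^[m] u) (f^[m] v) (f^[n] u) (f^[n] v) := by
  -- iterates of the semiconjugacy
  have hiter : ∀ (x : S1) (n : ℕ), φ (f^[n] x) = φ x + n • α := by
    intro x n
    induction n with
    | zero => simp
    | succ n ih =>
      rw [Function.iterate_succ_apply', hsemi, ih, succ_nsmul]
      abel
  -- set up coordinates
  obtain ⟨x, hx⟩ : ∃ x : ℝ, (↑x : S1) = φ u := by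
    induction (φ u) using QuotientAddGroup.induction_on with
    | H a => exact ⟨a, rfl⟩
  obtain ⟨s, hs⟩ : ∃ s : ℝ, (↑s : S1) = φ v - φ u := by
    induction (φ v - φ u) using QuotientAddGroup.induction_on with
    | H a => exact ⟨a, rfl⟩
  set t : ℝ := toIcoMod (one_pos : (0:ℝ) < 1) 0 s with ht
  have htmem : t ∈ Set.Ico (0:ℝ) (0 + 1) := toIcoMod_mem_Ico one_pos 0 s
  have hts : (↑t : S1) = φ v - φ u := by
    rw [← hs, ht]
    have h1 : toIcoMod (one_pos : (0:ℝ) < 1) 0 s = s - toIcoDiv (one_pos : (0:ℝ) < 1) 0 s • 1 :=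
      rfl
    rw [h1, AddCircle.coe_sub, sub_eq_self]
    exact (AddCircle.coe_eq_zero_iff _).2 ⟨_, rfl⟩
  have ht0 : 0 < t := by
    rcases htmem.1.lt_or_eq with h | h
    · exact h
    · exfalso
      apply huv
      have : (↑t : S1) = 0 := by rw [← h]; simp
      rw [this] at hts
      have := hts.symm
      rw [sub_eq_zero] at this
      exact this.symm
  have ht1 : t < 1 := by simpa using htmem.2
  have hv : φ v = ↑(x + t) := by
    have h1 : φ v = φ u + ↑t := by rw [hts]; abel
    rw [h1, ← hx, ← AddCircle.coe_add]
  -- find k > 0 with k • α = ↑(-δ), 0 < δ < min t (1-t)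
  set ε : ℝ := min t (1 - t) with hε
  have hε0 : 0 < ε := lt_min ht0 (by linarith)
  have hU : IsOpen ((fun y : ℝ => (↑y : S1)) '' Set.Ioo (-ε) 0) := by
    exact QuotientAddGroup.isOpenMap_coe _ isOpen_Ioo
  have hUne : ((fun y : ℝ => (↑y : S1)) '' Set.Ioo (-ε) 0).Nonempty :=
    ⟨_, ⟨-(ε/2), ⟨by linarith, by linarith⟩, rfl⟩⟩
  obtain ⟨k, hk⟩ := (denseRange_nsmul_irr α hirr).exists_mem_open hU hUne
  obtain ⟨y, hy, hyk⟩ := hk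
  set δ : ℝ := -y with hδ
  have hδ0 : 0 < δ := by simp only [hδ]; linarith [hy.2]
  have hδε : δ < ε := by simp only [hδ]; linarith [hy.1]
  have hγ : k • α = (↑(-δ) : S1) := by rw [← hyk]; norm_num [hδ]
  have hk0 : 0 < k := by
    rcases Nat.eq_zero_or_pos k with rfl | h
    · exfalso
      have h0 : (0 : S1) = (↑(-δ) : S1) := by simpa using hγ
      rcases (AddCircle.coe_eq_zero_iff _).1 h0.symm with ⟨n, hn⟩
      have : (n : ℝ) = -δ := by simpa using hn
      have hδ1 : δ < 1 := lt_of_lt_of_le hδε (le_trans (min_le_left _ _) ht1.le)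
      rcases lt_trichotomy n 0 with h | h | h
      · have hn1 : n ≤ -1 := by omega
        have : (n : ℝ) ≤ -1 := by exact_mod_cast hn1
        linarith
      · subst h; simp at this; linarith
      · have : (1:ℝ) ≤ (n : ℝ) := by exact_mod_cast h
        linarith
    · exact h
  have hδt : δ < t := lt_of_lt_of_le hδε (min_le_left _ _)
  have hδt' : δ < 1 - t := lt_of_lt_of_le hδε (min_le_right _ _)
  -- downstairs sbtw facts
  have d1 : sbtw (φ u) (φ v + k • α) (φ v) := by
    rw [hγ, hv, ← hx]
    have h1 : ((↑(x + t) : S1) + ↑(-δ)) = (↑(x + (t - δ)) : S1) := by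
      rw [← AddCircle.coe_add]; congr 1; ring
    rw [h1]
    have := sbtw_coe x (u := t - δ) (w := t) (by linarith) (by linarith) ht1
    exact this
  have d2 : sbtw (φ v) (φ u + k • α) (φ u) := by
    rw [hγ, hv, ← hx]
    have e1 : ((↑x : S1) + ↑(-δ)) = (↑((x + t) + (1 - t - δ)) : S1) := by
      have h2 : (x + t) + (1 - t - δ) = (x + -δ) + 1 := by ring
      rw [h2, AddCircle.coe_add_period, ← AddCircle.coe_add]
    have e2 : (↑x : S1) = (↑((x + t) + (1 - t)) : S1) := by
      have : (x + t) + (1 - t) = x + 1 := by ring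
      rw [this, AddCircle.coe_add_period]
    rw [e1, e2]
    exact sbtw_coe (x + t) (u := 1 - t - δ) (w := 1 - t) (by linarith) (by linarith) (by linarith)
  -- lift upstairs
  refine ⟨0, k, hk0, Or.inr ⟨?_, ?_⟩⟩
  · apply sbtw_lift_s17 hmono
    rw [Function.iterate_zero_apply, Function.iterate_zero_apply, hiter]
    exact d1
  · apply sbtw_lift_s17 hmono
    rw [Function.iterate_zero_apply, Function.iterate_zero_apply, hiter]
    exact d2
end
end

section
/- Let d ≥ 2 and σ_d(x)=d·x on ℝ/ℤ. Suppose B is the convex hull of a finite set of circle points, B is not precritical (no iterate of σ_d identifies two of its vertices), and the interiors of all forward images σ_d^i(B) (convex hulls of the images of the vertex set) are pairwise disjoint. If additionally some σ_d^i(B) and σ_d^j(B) (i < j) share a boundary point v which is a common vertex, then v is preperiodic under σ_d. -/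
open Function

noncomputable section

/-!
Put `g = j - i` and `D = d ^ g`. The points `x n = σ_d^[g n] v` form an orbit of `z ↦ D • z`, and
both ends of the chord `{x n, x (n + 1)}` lie in `σ_d^[g n + j] '' V` (one comes from the vertex
over `v` in `σ_d^[j] '' V`, the other from the one in `σ_d^[i] '' V`), so these chords are pairwise
unlinked. If `v` were not preperiodic, the `x n` would be distinct. Lifted to `[0, 1)` they form a
noncrossing path in `ℝ`, which has at most two cluster points: a late point near a middle cluster
point would trap the path between it and one of the outer ones. The images of the cluster points
form a finite set, invariant under `z ↦ D • z`, on which the orbit accumulates; but this map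
expands distances by the factor `D` at small scales, so the orbit is pushed away from that set.
-/

open Set Filter Topology Metric

lemma linked_swap_left {a b c e : S1} : Linked a b c e ↔ Linked b a c e := by
  unfold Linked; tauto

lemma linked_swap_right {a b c e : S1} : Linked a b c e ↔ Linked a b e c := by
  unfold Linked; tauto

lemma sbtw_coe_of_lt {a b c : ℝ} (hab : a < b) (hbc : b < c) (hca : c < a + 1) :
    sbtw (a : S1) (b : S1) (c : S1) := by
  refine sbtw_iff_btw_not_btw.2 ⟨?_, fun h => ?_⟩
  · show Btw.btw (a : ℝ ⧸ AddSubgroup.zmultiples (1 : ℝ)) b c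
    rw [QuotientAddGroup.btw_coe_iff, (toIcoMod_eq_self _).2 ⟨hab.le, by linarith⟩,
      (toIocMod_eq_self _).2 ⟨by linarith, by linarith⟩]
    exact hbc.le
  · change Btw.btw (c : ℝ ⧸ AddSubgroup.zmultiples (1 : ℝ)) b a at h
    rw [QuotientAddGroup.btw_coe_iff, ← toIcoMod_add_right, ← toIocMod_add_right,
      (toIcoMod_eq_self _).2 ⟨by linarith, by linarith⟩,
      (toIocMod_eq_self _).2 ⟨by linarith, by linarith⟩] at h
    linarith

def ChordsCross (a b c e : ℝ) : Prop :=
  (c ∈ uIoo a b ∧ e ∉ uIcc a b) ∨ (e ∈ uIoo a b ∧ c ∉ uIcc a b)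

lemma linked_coe_of_chordsCross {a b c e : ℝ} (ha : a ∈ Ico (0 : ℝ) 1) (hb : b ∈ Ico (0 : ℝ) 1)
    (hc : c ∈ Ico (0 : ℝ) 1) (he : e ∈ Ico (0 : ℝ) 1) (h : ChordsCross a b c e) :
    Linked (a : S1) b c e := by
  wlog hce : c ∈ uIoo a b ∧ e ∉ uIcc a b generalizing c e
  · exact linked_swap_right.2 (this he hc (Or.symm h) (h.resolve_left hce))
  wlog hab : a < b generalizing a b
  · refine linked_swap_left.2 (this hb ha (by unfold ChordsCross at h ⊢; rwa [uIoo_comm, uIcc_comm])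
      (by rwa [uIoo_comm, uIcc_comm]) ?_)
    rcases (not_lt.1 hab).lt_or_eq with h' | h'
    · exact h'
    · simp [h'] at hce
  rw [uIoo_of_lt hab, uIcc_of_lt hab, mem_Ioo, mem_Icc, not_and_or, not_le, not_le] at hce
  obtain ⟨⟨hac, hcb⟩, he' | he'⟩ := hce
  · refine Or.inl ⟨sbtw_coe_of_lt hac hcb (by linarith [ha.1, hb.2]), ?_⟩
    have := sbtw_coe_of_lt (a := b) (b := e + 1) (c := a + 1) (by linarith [he.1, hb.2])
      (by linarith) (by linarith)
    rwa [AddCircle.coe_add_period, AddCircle.coe_add_period] at this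
  · refine Or.inl ⟨sbtw_coe_of_lt hac hcb (by linarith [ha.1, hb.2]), ?_⟩
    have := sbtw_coe_of_lt (a := b) (b := e) (c := a + 1) he' (by linarith [he.2, ha.1])
      (by linarith)
    rwa [AddCircle.coe_add_period] at this

lemma notMem_uIcc_of_notMem_uIoo {α : Type*} [LinearOrder α] {a b x : α} (hxa : x ≠ a) (hxb : x ≠ b) (hx : x ∉ uIoo a b) :
    x ∉ uIcc a b := by
  rcases le_total a b with h | h
  · rw [uIoo_of_le h] at hx; rw [uIcc_of_le h]
    exact fun hx' => hx ⟨lt_of_le_of_ne hx'.1 hxa.symm, lt_of_le_of_ne hx'.2 hxb⟩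
  · rw [uIoo_of_ge h] at hx; rw [uIcc_of_ge h]
    exact fun hx' => hx ⟨lt_of_le_of_ne hx'.1 hxb.symm, lt_of_le_of_ne hx'.2 hxa⟩

namespace NoncrossingPath

variable {t : ℕ → ℝ} (hinj : Injective t)
  (hnc : ∀ m n, m ≠ n → ¬ ChordsCross (t m) (t (m + 1)) (t n) (t (n + 1)))
include hinj hnc

lemma mem_uIoo_succ_iff {n m : ℕ} (hm : n + 2 ≤ m) :
    t (m + 1) ∈ uIoo (t n) (t (n + 1)) ↔ t m ∈ uIoo (t n) (t (n + 1)) := by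
  have outside : ∀ k, n + 2 ≤ k → t k ∉ uIoo (t n) (t (n + 1)) → t k ∉ uIcc (t n) (t (n + 1)) :=
    fun k hk => notMem_uIcc_of_notMem_uIoo (hinj.ne (by omega)) (hinj.ne (by omega))
  refine ⟨fun h => ?_, fun h => ?_⟩ <;> by_contra h'
  · exact hnc n m (by omega) (Or.inr ⟨h, outside m hm h'⟩)
  · exact hnc n m (by omega) (Or.inl ⟨h, outside (m + 1) (by omega) h'⟩)

lemma mem_uIoo_iff {n m : ℕ} (hm : n + 2 ≤ m) :
    t m ∈ uIoo (t n) (t (n + 1)) ↔ t (n + 2) ∈ uIoo (t n) (t (n + 1)) := by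
  induction m, hm using Nat.le_induction with
  | base => rfl
  | succ m hm ih => rw [mem_uIoo_succ_iff hinj hnc hm, ih]

lemma mem_Ioo_succ {p q : ℝ} (hp : MapClusterPt p atTop t)
    (hq : MapClusterPt q atTop t) {n : ℕ} (hnp : t (n + 1) ≠ p) (hnq : t (n + 1) ≠ q)
    (hn : t n ∈ Ioo p q) : t (n + 1) ∈ Ioo p q := by
  by_cases hin : t (n + 2) ∈ uIoo (t n) (t (n + 1))
  · have tail : ∀ᶠ m in atTop, t m ∈ uIcc (t n) (t (n + 1)) :=
      eventually_atTop.2 ⟨n + 2, fun m hm =>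
        uIoo_subset_uIcc_self ((mem_uIoo_iff hinj hnc hm).2 hin)⟩
    have hp' : p ∈ uIcc (t n) (t (n + 1)) := isClosed_Icc.mem_of_mapClusterPt hp tail
    have hq' : q ∈ uIcc (t n) (t (n + 1)) := isClosed_Icc.mem_of_mapClusterPt hq tail
    exfalso
    rcases le_total (t n) (t (n + 1)) with h | h
    · rw [uIcc_of_le h] at hp'; linarith [hp'.1, hn.1]
    · rw [uIcc_of_ge h] at hq'; linarith [hq'.2, hn.2]
  · have tail : ∀ᶠ m in atTop, t m ∈ (uIoo (t n) (t (n + 1)))ᶜ :=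
      eventually_atTop.2 ⟨n + 2, fun m hm => (mem_uIoo_iff hinj hnc hm).not.2 hin⟩
    have hp' := isOpen_Ioo.isClosed_compl.mem_of_mapClusterPt hp tail
    have hq' := isOpen_Ioo.isClosed_compl.mem_of_mapClusterPt hq tail
    constructor
    · by_contra h
      exact hp' (mem_uIoo_of_gt (lt_of_le_of_ne (not_lt.1 h) hnp) hn.1)
    · by_contra h
      exact hq' (mem_uIoo_of_lt hn.2 (lt_of_le_of_ne (not_lt.1 h) hnq.symm))

/-- A late point strictly between two cluster points traps the rest of the path there. -/
lemma mem_Icc_of_mapClusterPt {p q r : ℝ} (hp : MapClusterPt p atTop t)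
    (hq : MapClusterPt q atTop t) {N n : ℕ} (hN : ∀ m ≥ N, t m ≠ p ∧ t m ≠ q) (hn : N ≤ n)
    (htn : t n ∈ Ioo p q) (hr : MapClusterPt r atTop t) : r ∈ Icc p q := by
  have trapped : ∀ k, t (n + k) ∈ Ioo p q := by
    intro k
    induction k with
    | zero => exact htn
    | succ k ih =>
      exact mem_Ioo_succ hinj hnc hp hq (hN (n + k + 1) (by omega)).1
        (hN (n + k + 1) (by omega)).2 ih
  refine isClosed_Icc.mem_of_mapClusterPt hr (eventually_atTop.2 ⟨n, fun m hm => ?_⟩)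
  simpa [Nat.add_sub_cancel' hm] using Ioo_subset_Icc_self (trapped (m - n))

lemma not_three_mapClusterPt {p r q : ℝ} (hpr : p < r) (hrq : r < q)
    (hp : MapClusterPt p atTop t) (hr : MapClusterPt r atTop t) (hq : MapClusterPt q atTop t) :
    False := by
  have avoid : ∀ a, ∀ᶠ m in atTop, t m ≠ a := fun a =>
    Nat.cofinite_eq_atTop ▸ hinj.tendsto_cofinite.eventually (eventually_cofinite_ne a)
  obtain ⟨N, hN⟩ := eventually_atTop.1 (((avoid p).and (avoid r)).and (avoid q))
  obtain ⟨n, htn, hn⟩ := ((hr.frequently (Ioo_mem_nhds hpr hrq)).and_eventually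
    (eventually_ge_atTop N)).exists
  obtain ⟨⟨hnp, hnr⟩, hnq⟩ := hN n hn
  rcases hnr.lt_or_gt with h | h
  · have := mem_Icc_of_mapClusterPt hinj hnc hp hr (fun m hm => ⟨(hN m hm).1.1, (hN m hm).1.2⟩)
      hn ⟨htn.1, h⟩ hq
    linarith [this.2]
  · have := mem_Icc_of_mapClusterPt hinj hnc hr hq (fun m hm => ⟨(hN m hm).1.2, (hN m hm).2⟩)
      hn ⟨h, htn.2⟩ hp
    linarith [this.1]

lemma finite_mapClusterPt : {p | MapClusterPt p atTop t}.Finite :=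
  Set.finite_of_forall_not_lt_lt fun _ hp _ hr _ hq hpr hrq =>
    not_three_mapClusterPt hinj hnc hpr hrq hp hr hq

end NoncrossingPath

section ClusterPoints

variable {X : Type*} [PseudoMetricSpace X] {u : ℕ → X}

lemma tendsto_infDist_mapClusterPt {K : Set X} (hK : IsCompact K) (hu : ∀ n, u n ∈ K) :
    Tendsto (fun n => infDist (u n) {z | MapClusterPt z atTop u}) atTop (𝓝 0) := by
  set C := {z | MapClusterPt z atTop u}
  refine tendsto_order.2 ⟨fun a ha => Eventually.of_forall fun n => ha.trans_le infDist_nonneg,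
    fun ε hε => ?_⟩
  by_contra hfar
  have hfarK : IsCompact (K ∩ {y | ε ≤ infDist y C}) :=
    hK.inter_right (isClosed_le continuous_const (continuous_infDist_pt C))
  obtain ⟨z, hzfar, hz⟩ := hfarK.exists_mapClusterPt_of_frequently
    ((not_eventually.1 hfar).mono fun n hn => ⟨hu n, not_lt.1 hn⟩)
  exact hε.not_ge (infDist_zero_of_mem (s := C) hz ▸ hzfar.2)

lemma mem_of_mapClusterPt_of_tendsto_infDist {F : Set X} (hF : IsClosed F) (hne : F.Nonempty)
    (hu : Tendsto (fun n => infDist (u n) F) atTop (𝓝 0)) {y : X} (hy : MapClusterPt y atTop u) :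
    y ∈ F :=
  (hF.mem_iff_infDist_zero hne).2 <| eq_of_nhds_neBot <|
    ((hy.continuousAt_comp (continuous_infDist_pt F).continuousAt).clusterPt.mono hu)

end ClusterPoints

lemma Set.Finite.exists_pos_le_dist {X : Type*} [MetricSpace X] {F : Set X} (hF : F.Finite) :
    ∃ δ > 0, ∀ a ∈ F, ∀ b ∈ F, a ≠ b → δ ≤ dist a b := by
  have : ∀ᶠ δ in 𝓝[>] (0 : ℝ), ∀ p ∈ F ×ˢ F, p.1 ≠ p.2 → δ ≤ dist p.1 p.2 := by
    refine (hF.prod hF).eventually_all.2 fun p _ => ?_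
    by_cases h : p.1 = p.2
    · exact Eventually.of_forall fun _ h' => absurd h h'
    · exact nhdsWithin_le_nhds ((eventually_le_nhds (dist_pos.2 h)).mono fun _ hδ _ => hδ)
  obtain ⟨δ, hδ, hδpos⟩ := (this.and self_mem_nhdsWithin).exists
  exact ⟨δ, hδpos, fun a ha b hb hab => hδ (a, b) ⟨ha, hb⟩ hab⟩

lemma dist_coe_le (a b : ℝ) : dist (a : S1) (b : S1) ≤ dist a b := by
  rw [dist_eq_norm, dist_eq_norm, ← AddCircle.coe_sub]
  exact QuotientAddGroup.norm_mk_le_norm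

lemma dist_nsmul_eq_mul_dist (D : ℕ) {a b : S1} (h : D * dist a b ≤ 1 / 2) :
    dist (D • a) (D • b) = D * dist a b := by
  obtain ⟨y, hy⟩ := QuotientAddGroup.mk_surjective (a - b)
  set r := y - round y
  have hr : (r : S1) = a - b := by rw [AddCircle.coe_sub, ← hy]; simp
  have hr_half : |r| ≤ |(1 : ℝ)| / 2 := by rw [abs_one]; exact abs_sub_round y
  have hnorm : ‖a - b‖ = |r| := hr ▸ (AddCircle.norm_coe_eq_abs_iff (p := 1) one_ne_zero).2 hr_half
  simp only [dist_eq_norm] at h ⊢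
  rw [hnorm] at h ⊢
  have hDr : |(D * r : ℝ)| = D * |r| := by rw [abs_mul, Nat.abs_cast]
  rw [← smul_sub, ← hr, ← AddCircle.coe_nsmul, nsmul_eq_mul, ← hDr]
  exact (AddCircle.norm_coe_eq_abs_iff (p := 1) one_ne_zero).2 (by rw [hDr, abs_one]; exact h)

section Expansion

variable {D : ℕ} {F : Set S1}

/-- The point `f` of `F` nearest to `z` is sent to `D • f`, while every other point of `F` is at
distance at least `δ` from `D • f`. -/
lemma mul_infDist_le_infDist_nsmul (hF : F.Finite) (hne : F.Nonempty)
    (hmaps : MapsTo (D • ·) F F) {δ : ℝ} (hδ : ∀ a ∈ F, ∀ b ∈ F, a ≠ b → δ ≤ dist a b) {z : S1}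
    (hzδ : 2 * (D * infDist z F) ≤ δ) (hz : 2 * (D * infDist z F) ≤ 1) :
    D * infDist z F ≤ infDist (D • z) F := by
  obtain ⟨f, hf, hzf⟩ := hF.isCompact.exists_infDist_eq_dist hne z
  have hDf : dist (D • z) (D • f) = D * infDist z F := by
    rw [dist_nsmul_eq_mul_dist D (by rw [← hzf]; linarith), hzf]
  refine (le_infDist hne).2 fun w hw => ?_
  by_cases hwf : w = D • f
  · rw [hwf, hDf]
  have := hδ w hw (D • f) (hmaps hf) hwf
  have := dist_triangle_left w (D • f) (D • z)
  linarith

lemma orbit_notMem_of_mapsTo {x : ℕ → S1} (hx : ∀ n, x (n + 1) = D • x n) (hinj : Injective x)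
    (hF : F.Finite) (hmaps : MapsTo (D • ·) F F) (n : ℕ) : x n ∉ F := by
  intro hn
  have orbit : ∀ k, x (n + k) ∈ F := by
    intro k
    induction k with
    | zero => exact hn
    | succ k ih => rw [← add_assoc, hx]; exact hmaps ih
  exact hF.not_infinite (infinite_of_injective_forall_mem (hinj.comp (add_right_injective n)) orbit)

theorem not_tendsto_infDist_of_injective (hD : 2 ≤ D) {x : ℕ → S1}
    (hx : ∀ n, x (n + 1) = D • x n) (hinj : Injective x) (hF : F.Finite) (hne : F.Nonempty)
    (hmaps : MapsTo (D • ·) F F) : ¬ Tendsto (fun n => infDist (x n) F) atTop (𝓝 0) := by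
  intro hnear
  obtain ⟨δ, hδ0, hδ⟩ := hF.exists_pos_le_dist
  set ε := min δ 1 / (2 * D)
  have hε : 2 * (D * ε) = min δ 1 := by simp only [ε]; field_simp
  obtain ⟨N, hN⟩ := eventually_atTop.1 (hnear.eventually (gt_mem_nhds (show 0 < ε by positivity)))
  have grow : ∀ k, (D : ℝ) ^ k * infDist (x N) F ≤ infDist (x (N + k)) F := by
    intro k
    induction k with
    | zero => simp
    | succ k ih =>
      have hsmall : 2 * (D * infDist (x (N + k)) F) ≤ min δ 1 := by
        rw [← hε]; gcongr; exact (hN (N + k) (by omega)).le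
      calc (D : ℝ) ^ (k + 1) * infDist (x N) F = D * (D ^ k * infDist (x N) F) := by ring
        _ ≤ D * infDist (x (N + k)) F := by gcongr
        _ ≤ infDist (x (N + k + 1)) F := by
          rw [hx]
          exact mul_infDist_le_infDist_nsmul hF hne hmaps hδ (hsmall.trans (min_le_left _ _))
            (hsmall.trans (min_le_right _ _))
  have hpos : 0 < infDist (x N) F :=
    (hF.isClosed.notMem_iff_infDist_pos hne).1 (orbit_notMem_of_mapsTo hx hinj hF hmaps N)
  obtain ⟨k, hk⟩ := pow_unbounded_of_one_lt (ε / infDist (x N) F)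
    (by exact_mod_cast hD : (1 : ℝ) < D)
  have := (div_lt_iff₀ hpos).1 hk
  linarith [grow k, hN (N + k) (by omega)]

end Expansion

theorem not_injective_of_forall_not_linked {D : ℕ} (hD : 2 ≤ D) {x : ℕ → S1}
    (hx : ∀ n, x (n + 1) = D • x n)
    (hlink : ∀ m n, m ≠ n → ¬ Linked (x m) (x (m + 1)) (x n) (x (n + 1))) : ¬ Injective x := by
  intro hinj
  set t : ℕ → ℝ := fun n => AddCircle.equivIco 1 0 (x n)
  have ht : ∀ n, (t n : S1) = x n := fun n => AddCircle.coe_equivIco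
  have htmem : ∀ n, t n ∈ Ico (0 : ℝ) 1 := fun n => by simpa using (AddCircle.equivIco 1 0 (x n)).2
  have tinj : Injective t := fun m n h => hinj (by rw [← ht, ← ht, h])
  have tnc : ∀ m n, m ≠ n → ¬ ChordsCross (t m) (t (m + 1)) (t n) (t (n + 1)) := fun m n hmn h =>
    hlink m n hmn (by
      simpa only [ht] using linked_coe_of_chordsCross (htmem _) (htmem _) (htmem _) (htmem _) h)
  set C := {p | MapClusterPt p atTop t}
  have hC : C.Finite := NoncrossingPath.finite_mapClusterPt tinj tnc
  have htK : ∀ n, t n ∈ Icc (0 : ℝ) 1 := fun n => Ico_subset_Icc_self (htmem n)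
  obtain ⟨p, -, hp⟩ := isCompact_Icc.exists_mapClusterPt (f := atTop) (u := t)
    (tendsto_principal.2 (Eventually.of_forall htK))
  set F := ((↑) : ℝ → S1) '' C
  have hFne : F.Nonempty := ⟨_, mem_image_of_mem _ hp⟩
  have hnear : Tendsto (fun n => infDist (x n) F) atTop (𝓝 0) := by
    refine squeeze_zero (fun _ => infDist_nonneg) (fun n => (le_infDist ⟨p, hp⟩).2 fun c hc => ?_)
      (tendsto_infDist_mapClusterPt isCompact_Icc htK)
    exact (infDist_le_dist_of_mem (mem_image_of_mem _ hc)).trans (ht n ▸ dist_coe_le _ _)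
  have hinv : MapsTo (D • ·) F F := by
    rintro _ ⟨c, hc, rfl⟩
    refine mem_of_mapClusterPt_of_tendsto_infDist (hC.image _).isClosed hFne hnear ?_
    have hcont : Continuous ((↑) : ℝ → S1) := AddCircle.continuous_mk' 1
    have hcx : MapClusterPt (c : S1) atTop x := by
      simpa only [comp_def, ht] using hc.continuousAt_comp hcont.continuousAt
    have hshift : x ∘ (· + 1) = (D • ·) ∘ x := funext hx
    exact .of_comp (tendsto_add_atTop_nat 1) <|
      hshift ▸ hcx.continuousAt_comp (continuous_const_smul D).continuousAt
  exact not_tendsto_infDist_of_injective hD hx hinj (hC.image _) hFne hinv hnear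

theorem exists_pow_add_smul_eq_of_forall_not_linked {D : ℕ} (hD : 2 ≤ D) (v : S1)
    (hlink : ∀ m n, m ≠ n →
      ¬ Linked (D ^ m • v) (D ^ (m + 1) • v) (D ^ n • v) (D ^ (n + 1) • v)) :
    ∃ m k, 0 < k ∧ D ^ (m + k) • v = D ^ m • v := by
  obtain ⟨a, b, hab, hne⟩ := not_injective_iff.1 <| not_injective_of_forall_not_linked hD
    (x := fun n => D ^ n • v) (fun n => pow_succ' D n ▸ mul_smul ..) hlink
  rcases hne.lt_or_gt with h | h
  · exact ⟨a, b - a, by omega, by rw [Nat.add_sub_cancel' h.le]; exact hab.symm⟩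
  · exact ⟨b, a - b, by omega, by rw [Nat.add_sub_cancel' h.le]; exact hab⟩

theorem stmt19_general (d : ℕ) (hd : 2 ≤ d) (V : Set S1)
    (hdisj : ∀ i j : ℕ, i ≠ j →
      ∀ p ∈ (sig d)^[i] '' V, ∀ q ∈ (sig d)^[i] '' V,
      ∀ r ∈ (sig d)^[j] '' V, ∀ s ∈ (sig d)^[j] '' V, ¬ Linked p q r s)
    (i j : ℕ) (hij : i < j) (v : S1)
    (hv : v ∈ (sig d)^[i] '' V ∩ (sig d)^[j] '' V) :
    ∃ m k : ℕ, 0 < k ∧ (sig d)^[m + k] v = (sig d)^[m] v := by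
  have hsig : ∀ n z, (sig d)^[n] z = d ^ n • z := smul_iterate_apply d
  obtain ⟨⟨u, hu, huv⟩, ⟨w, hw, hwv⟩⟩ := hv
  obtain ⟨g, rfl⟩ : ∃ g, j = i + g := ⟨j - i, by omega⟩
  have hg : 0 < g := by omega
  have chord : ∀ m, (d ^ g) ^ m • v ∈ (sig d)^[g * m + (i + g)] '' V ∧
      (d ^ g) ^ (m + 1) • v ∈ (sig d)^[g * m + (i + g)] '' V := by
    intro m
    refine ⟨⟨w, hw, ?_⟩, ⟨u, hu, ?_⟩⟩
    · rw [iterate_add_apply, hwv, hsig, ← pow_mul]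
    · rw [← huv, hsig, hsig, ← mul_smul, ← pow_mul, ← pow_add]; ring_nf
  obtain ⟨m, k, hk, h⟩ := exists_pow_add_smul_eq_of_forall_not_linked
    (hd.trans (Nat.le_self_pow hg.ne' d)) v fun m n hmn =>
      hdisj _ _ (fun h => hmn (Nat.eq_of_mul_eq_mul_left hg (by omega)))
        _ (chord m).1 _ (chord m).2 _ (chord n).1 _ (chord n).2
  refine ⟨g * m, g * k, by positivity, ?_⟩
  rw [hsig, hsig, ← mul_add, pow_mul, h, ← pow_mul]

/-- If B is the convex hull of a finite non-precritical circle set V whose forward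
images have pairwise disjoint interiors (pairwise unlinked chords), and two forward
images share a vertex v, then v is preperiodic. -/
theorem stmt19 (d : ℕ) (hd : 2 ≤ d) (V : Set S1) (hfin : V.Finite)
    (hnc : ∀ u ∈ V, ∀ w ∈ V, u ≠ w → ∀ k : ℕ, (sig d)^[k] u ≠ (sig d)^[k] w)
    (hdisj : ∀ i j : ℕ, i ≠ j →
      ∀ p ∈ (sig d)^[i] '' V, ∀ q ∈ (sig d)^[i] '' V,
      ∀ r ∈ (sig d)^[j] '' V, ∀ s ∈ (sig d)^[j] '' V, ¬ Linked p q r s)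
    (i j : ℕ) (hij : i < j) (v : S1)
    (hv : v ∈ (sig d)^[i] '' V ∩ (sig d)^[j] '' V) :
    ∃ m k : ℕ, 0 < k ∧ (sig d)^[m + k] v = (sig d)^[m] v :=
  stmt19_general d hd V hdisj i j hij v hv
end
end
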